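/- arXiv:2601.14057 — 9 statements merged into one kernel-verified Lean document; each statement's English description precedes it below -/
import Mathlib

section
/- For all integers n and k with 1 ≤ k < n, the equation σ_k(x_1,…,x_n) = σ_n(x_1,…,x_n) has at least one solution in positive integers x_1 ≤ x_2 ≤ … ≤ x_n, and the number of such solutions is strictly less than 2^(n·2^C(n,k)), where C(n,k) is the binomial coefficient. In particular, 1 ≤ f_k(n) < 2^(n·2^C(n,k)). -/
/-!
Existence: appending `z` to `y` gives `σ_k(y, z) = σ_k(y) + z σ_{k-1}(y)` and
`σ_n(y, z) = z ∏ y`, so it suffices to find `y` with `∏ y = 1 + σ_{k-1}(y)` and take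
`z = σ_k(y)`. Such `y` are built the same way: if `∏ y = 1 + σ_j(y)`, then appending
`1 + σ_{j+1}(y)` gives a tuple with `∏ = 1 + σ_{j+1}`; start from ones followed by a `2`.

Bound: dividing by `∏ x`, a solution is an Egyptian fraction identity
`∑_{|S| = n-k} 1 / x_S = 1` with `x_S = ∏_{i ∈ S} x_i`. For `t < n`, the sets `S` inside
`{0, …, t-1}` contribute a sum `< 1` whose denominator divides `Q_t = ∏_S x_S`, hence at most
`1 - 1 / Q_t`; each of the at most `C(n,k)` remaining sets has `x_S ≥ x_t`. So
`x_t ≤ C(n,k) Q_t`, and `Q_t` is a power of `∏_{i<t} x_i`. Inductively every `x_t` is at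
most a power of `C(n,k)`, and the exponents add up to less than `2 ^ C(n,k)`.
-/

/-- The `k`-th elementary symmetric polynomial of `x 0, …, x (n-1)`. -/
def esymm (n k : ℕ) (x : Fin n → ℕ) : ℕ :=
  ∑ s ∈ Finset.univ.powersetCard k, ∏ i ∈ s, x i

/-- The set of nondecreasing `n`-tuples of positive integers with
`σ_k(x_1,…,x_n) = σ_n(x_1,…,x_n)`. -/
def sols (n k : ℕ) : Set (Fin n → ℕ) :=
  {x | (∀ i, 0 < x i) ∧ Monotone x ∧ esymm n k x = esymm n n x}

open Finset

theorem Multiset.esymm_cons_succ {R : Type*} [CommSemiring R] (a : R) (s : Multiset R)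
    (j : ℕ) :
    (a ::ₘ s).esymm (j + 1) = s.esymm (j + 1) + a * s.esymm j := by
  simp [Multiset.esymm, Multiset.map_map, Multiset.sum_map_mul_left]

theorem esymm_eq_esymm_map_val {n : ℕ} (x : Fin n → ℕ) (j : ℕ) :
    esymm n j x = (univ.val.map x).esymm j :=
  (Finset.esymm_map_val x univ j).symm

theorem esymm_snoc {n : ℕ} (y : Fin n → ℕ) (z j : ℕ) :
    esymm (n + 1) (j + 1) (Fin.snoc y z) = esymm n (j + 1) y + z * esymm n j y := by
  have hy : (Fin.snoc y z : Fin (n + 1) → ℕ) ∘ Fin.castSuccEmb = y := funext fun i => by simp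
  simp only [esymm_eq_esymm_map_val]
  rw [Fin.univ_castSuccEmb, cons_val, Multiset.map_cons, Fin.snoc_last, map_val,
    Multiset.map_map, hy, Multiset.esymm_cons_succ]

theorem esymm_zero {n : ℕ} (x : Fin n → ℕ) : esymm n 0 x = 1 := by
  simp [esymm]

theorem esymm_self {n : ℕ} (x : Fin n → ℕ) : esymm n n x = ∏ i, x i := by
  unfold esymm
  simpa using
    congrArg (fun S => ∑ s ∈ S, ∏ i ∈ s, x i) (powersetCard_self (univ : Finset (Fin n)))

theorem le_esymm {n j : ℕ} {x : Fin n → ℕ} (hpos : ∀ i, 0 < x i) (hj : 1 ≤ j) (hjn : j ≤ n)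
    (i : Fin n) : x i ≤ esymm n j x := by
  obtain ⟨S, hiS, -, hS⟩ := exists_subsuperset_card_eq (subset_univ {i}) (by simpa using hj)
    (by simpa using hjn)
  calc x i ≤ ∏ k ∈ S, x k := single_le_prod' (fun k _ => hpos k) (singleton_subset_iff.mp hiS)
    _ ≤ esymm n j x := single_le_sum (f := fun S => ∏ k ∈ S, x k) (fun _ _ => Nat.zero_le _)
        (mem_powersetCard_univ.mpr hS)

theorem Monotone.snoc {α : Type*} [Preorder α] {n : ℕ} {y : Fin n → α} {z : α}
    (hy : Monotone y) (hz : ∀ i, y i ≤ z) : Monotone (Fin.snoc y z : Fin (n + 1) → α) := by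
  intro i j hij
  induction j using Fin.lastCases with
  | last => induction i using Fin.lastCases <;> simp [hz]
  | cast j =>
    induction i using Fin.lastCases with
    | last => exact absurd hij (not_le.mpr (Fin.castSucc_lt_last j))
    | cast i => simpa using hy (by simpa using hij)

theorem exists_prod_eq_one_add_esymm (a j : ℕ) :
    ∃ y : Fin (a + j + 1) → ℕ, (∀ i, 0 < y i) ∧ Monotone y ∧
      ∏ i, y i = 1 + esymm (a + j + 1) j y := by
  induction j with
  | zero =>
    refine ⟨Fin.snoc (fun _ => 1) 2, fun i => ?_, monotone_const.snoc (by simp), ?_⟩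
    · induction i using Fin.lastCases <;> simp
    · simp [esymm_zero]
  | succ j ih =>
    show ∃ y : Fin (a + j + 1 + 1) → ℕ, (∀ i, 0 < y i) ∧ Monotone y ∧
      ∏ i, y i = 1 + esymm (a + j + 1 + 1) (j + 1) y
    obtain ⟨y, hpos, hmono, hprod⟩ := ih
    set z := 1 + esymm (a + j + 1) (j + 1) y
    have hyz : ∀ i, y i ≤ z := fun i =>
      (le_esymm hpos (by omega) (by omega) i).trans (Nat.le_add_left _ 1)
    refine ⟨Fin.snoc y z, fun i => ?_, hmono.snoc hyz, ?_⟩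
    · induction i using Fin.lastCases <;> simp [hpos, z]
    · rw [Fin.prod_snoc, hprod, esymm_snoc]
      ring

theorem sols_nonempty {n k : ℕ} (hk : 1 ≤ k) (hkn : k < n) : (sols n k).Nonempty := by
  obtain ⟨j, rfl⟩ : ∃ j, k = j + 1 := ⟨k - 1, by omega⟩
  obtain ⟨a, rfl⟩ : ∃ a, n = a + j + 1 + 1 := ⟨n - j - 2, by omega⟩
  obtain ⟨y, hpos, hmono, hprod⟩ := exists_prod_eq_one_add_esymm a j
  set z := esymm (a + j + 1) (j + 1) y
  have hyz : ∀ i, y i ≤ z := le_esymm hpos (by omega) (by omega)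
  refine ⟨Fin.snoc y z, fun i => ?_, hmono.snoc hyz, ?_⟩
  · induction i using Fin.lastCases with
    | last => simpa using (hpos 0).trans_le (hyz 0)
    | cast i => simpa using hpos i
  · rw [esymm_self, Fin.prod_snoc, hprod, esymm_snoc]
    ring

theorem sum_inv_le_one_sub_inv_prod {ι : Type*} {s : Finset ι} {a : ι → ℕ}
    (ha : ∀ i ∈ s, 0 < a i) (h : ∑ i ∈ s, (a i : ℚ)⁻¹ < 1) :
    ∑ i ∈ s, (a i : ℚ)⁻¹ ≤ 1 - ((∏ i ∈ s, a i : ℕ) : ℚ)⁻¹ := by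
  classical
  set P := ∏ i ∈ s, a i with hP_def
  set M := ∑ i ∈ s, ∏ j ∈ s.erase i, a j
  have hP : (0 : ℚ) < P := by exact_mod_cast prod_pos ha
  have hMP : ∑ i ∈ s, (a i : ℚ)⁻¹ = M / P := by
    rw [eq_div_iff hP.ne', sum_mul]
    push_cast [M]
    refine sum_congr rfl fun i hi => ?_
    have hai : (a i : ℚ) ≠ 0 := by exact_mod_cast (ha i hi).ne'
    rw [hP_def, ← mul_prod_erase s a hi]
    push_cast
    field_simp
  have hM : M + 1 ≤ P := by
    have : (M : ℚ) < P := by rwa [hMP, div_lt_one hP] at h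
    exact_mod_cast this
  rw [hMP, div_le_iff₀ hP, sub_mul, inv_mul_cancel₀ hP.ne', one_mul]
  have : (M : ℚ) + 1 ≤ P := by exact_mod_cast hM
  linarith

theorem sum_inv_prod_eq_one_of_mem_sols {n k : ℕ} {x : Fin n → ℕ} (hx : x ∈ sols n k)
    (hkn : k ≤ n) : ∑ S ∈ powersetCard (n - k) univ, ((∏ i ∈ S, x i : ℕ) : ℚ)⁻¹ = 1 := by
  obtain ⟨hpos, -, heq⟩ := hx
  have hprod_ne : ∀ T : Finset (Fin n), ((∏ i ∈ T, x i : ℕ) : ℚ) ≠ 0 := fun T => by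
    exact_mod_cast (prod_pos fun i _ => hpos i).ne'
  have hcompl : ∀ T : Finset (Fin n), ((∏ i ∈ T, x i : ℕ) : ℚ)
      = (∏ i, x i : ℕ) * ((∏ i ∈ Tᶜ, x i : ℕ) : ℚ)⁻¹ := fun T => by
    rw [← prod_mul_prod_compl T x, Nat.cast_mul, mul_assoc, mul_inv_cancel₀ (hprod_ne _),
      mul_one]
  have hreindex : ∑ T ∈ powersetCard k univ, ((∏ i ∈ Tᶜ, x i : ℕ) : ℚ)⁻¹
      = ∑ S ∈ powersetCard (n - k) univ, ((∏ i ∈ S, x i : ℕ) : ℚ)⁻¹ :=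
    sum_nbij' compl compl
      (fun T hT => by
        rw [mem_powersetCard_univ] at hT ⊢
        rw [card_compl, hT, Fintype.card_fin])
      (fun S hS => by
        rw [mem_powersetCard_univ] at hS ⊢
        rw [card_compl, hS, Fintype.card_fin]
        omega)
      (fun T _ => compl_compl T) (fun S _ => compl_compl S) (fun _ _ => rfl)
  apply mul_left_cancel₀ (hprod_ne univ)
  rw [mul_one, ← hreindex, mul_sum, ← sum_congr rfl fun T _ => hcompl T]
  rw [esymm_self] at heq
  exact_mod_cast heq

def below (n t : ℕ) : Finset (Fin n) := {i | (i : ℕ) < t}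

@[simp] theorem mem_below {n t : ℕ} {i : Fin n} : i ∈ below n t ↔ (i : ℕ) < t := by
  simp [below]

theorem card_below {n t : ℕ} (ht : t ≤ n) : #(below n t) = t := by
  simp [below, Fin.card_filter_val_lt, ht]

theorem prod_below_succ {n t : ℕ} (ht : t < n) (x : Fin n → ℕ) :
    ∏ i ∈ below n (t + 1), x i = (∏ i ∈ below n t, x i) * x ⟨t, ht⟩ := by
  have : below n (t + 1) = insert ⟨t, ht⟩ (below n t) := by
    ext i
    simp [Fin.ext_iff]
    omega
  rw [this, prod_insert (by simp), mul_comm]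

theorem card_filter_mem_powersetCard {α : Type*} [DecidableEq α] {A : Finset α} {a : α}
    (ha : a ∈ A) (j : ℕ) : #{S ∈ powersetCard (j + 1) A | a ∈ S} = (#A - 1).choose j := by
  have hnot : {S ∈ powersetCard (j + 1) A | a ∉ S} = powersetCard (j + 1) (A.erase a) := by
    ext S
    simp only [mem_filter, mem_powersetCard, subset_erase]
    tauto
  have hsplit := card_filter_add_card_filter_not (s := powersetCard (j + 1) A) (p := (a ∈ ·))
  obtain ⟨b, hb⟩ : ∃ b, #A = b + 1 :=
    ⟨#A - 1, (Nat.succ_pred_eq_of_pos (card_pos.mpr ⟨a, ha⟩)).symm⟩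
  rw [hnot, card_powersetCard, card_powersetCard, card_erase_of_mem ha, hb,
    Nat.choose_succ_succ'] at hsplit
  rw [hb]
  simp only [Nat.add_sub_cancel] at hsplit ⊢
  omega

theorem prod_powersetCard_prod {α β : Type*} [DecidableEq α] [CommMonoid β] (A : Finset α)
    (f : α → β) (j : ℕ) :
    ∏ S ∈ powersetCard (j + 1) A, ∏ i ∈ S, f i = (∏ i ∈ A, f i) ^ (#A - 1).choose j := by
  calc ∏ S ∈ powersetCard (j + 1) A, ∏ i ∈ S, f i
      = ∏ S ∈ powersetCard (j + 1) A, ∏ i ∈ A, if i ∈ S then f i else 1 :=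
        prod_congr rfl fun S hS => by
          rw [prod_ite_mem, inter_eq_right.mpr (mem_powersetCard.mp hS).1]
    _ = ∏ i ∈ A, f i ^ #{S ∈ powersetCard (j + 1) A | i ∈ S} := by
        rw [prod_comm]
        exact prod_congr rfl fun i _ => by rw [prod_ite, prod_const, prod_const_one, mul_one]
    _ = (∏ i ∈ A, f i) ^ (#A - 1).choose j := by
        rw [← prod_pow]
        exact prod_congr rfl fun i hi => by rw [card_filter_mem_powersetCard hi]

theorem le_choose_mul_prod_below {n m : ℕ} {x : Fin n → ℕ} (hpos : ∀ i, 0 < x i)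
    (hmono : Monotone x) (hm : 1 ≤ m) (hmn : m ≤ n)
    (hsum : ∑ S ∈ powersetCard m univ, ((∏ i ∈ S, x i : ℕ) : ℚ)⁻¹ = 1) (t : Fin n) :
    x t ≤ n.choose m * (∏ i ∈ below n t, x i) ^ ((t - 1 : ℕ).choose (m - 1)) := by
  set 𝒜 := powersetCard m (univ : Finset (Fin n))
  set ℬ := powersetCard m (below n t)
  set a : Finset (Fin n) → ℕ := fun S => ∏ i ∈ S, x i
  have ha : ∀ S, 0 < a S := fun S => prod_pos fun i _ => hpos i
  have hxt : (0 : ℚ) < x t := by exact_mod_cast hpos t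
  have hfar : ∀ S ∈ 𝒜 \ ℬ, x t ≤ a S := by
    intro S hS
    obtain ⟨hS𝒜, hSℬ⟩ := mem_sdiff.mp hS
    obtain ⟨i, hiS, hit⟩ := not_subset.mp fun h =>
      hSℬ (mem_powersetCard.mpr ⟨h, (mem_powersetCard.mp hS𝒜).2⟩)
    exact (hmono (Fin.le_iff_val_le_val.mpr (by simpa using hit))).trans
      (single_le_prod' (fun k _ => hpos k) hiS)
  obtain ⟨S₀, htS₀, -, hS₀⟩ := exists_subsuperset_card_eq (subset_univ {t})
    (by simpa using hm) (by simpa using hmn)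
  have hS₀ : S₀ ∈ 𝒜 \ ℬ := mem_sdiff.mpr ⟨mem_powersetCard_univ.mpr hS₀, fun h => by
    simpa using (mem_powersetCard.mp h).1 (singleton_subset_iff.mp htS₀)⟩
  have hfar_pos : 0 < ∑ S ∈ 𝒜 \ ℬ, (a S : ℚ)⁻¹ :=
    sum_pos' (fun S _ => by positivity) ⟨S₀, hS₀, by have := ha S₀; positivity⟩
  have hsplit : ∑ S ∈ ℬ, (a S : ℚ)⁻¹ + ∑ S ∈ 𝒜 \ ℬ, (a S : ℚ)⁻¹ = 1 := by
    rw [add_comm, sum_sdiff (powersetCard_mono (subset_univ _))]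
    exact hsum
  have hnear := sum_inv_le_one_sub_inv_prod (fun S _ => ha S)
    (by linarith : ∑ S ∈ ℬ, (a S : ℚ)⁻¹ < 1)
  have hfar_le : ∑ S ∈ 𝒜 \ ℬ, (a S : ℚ)⁻¹ ≤ n.choose m * (x t : ℚ)⁻¹ :=
    calc ∑ S ∈ 𝒜 \ ℬ, (a S : ℚ)⁻¹ ≤ ∑ S ∈ 𝒜 \ ℬ, (x t : ℚ)⁻¹ :=
          sum_le_sum fun S hS => inv_anti₀ hxt (by exact_mod_cast hfar S hS)
      _ = #(𝒜 \ ℬ) * (x t : ℚ)⁻¹ := by rw [sum_const, nsmul_eq_mul]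
      _ ≤ n.choose m * (x t : ℚ)⁻¹ := by
          gcongr
          calc #(𝒜 \ ℬ) ≤ #𝒜 := card_le_card sdiff_subset
            _ = n.choose m := by simp [𝒜]
  set Q := ∏ S ∈ ℬ, a S with hQ_def
  have hQ : (0 : ℚ) < Q := by exact_mod_cast prod_pos fun S _ => ha S
  have key : (x t : ℚ) ≤ n.choose m * Q :=
    calc (x t : ℚ) = x t * Q * (Q : ℚ)⁻¹ := by field_simp
      _ ≤ x t * Q * (n.choose m * (x t : ℚ)⁻¹) := by gcongr; linarith
      _ = n.choose m * Q := by field_simp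
  obtain ⟨j, rfl⟩ : ∃ j, m = j + 1 := ⟨m - 1, by omega⟩
  rw [Nat.add_sub_cancel]
  rwa [hQ_def, prod_powersetCard_prod, card_below t.isLt.le, ← Nat.cast_mul, Nat.cast_le]
    at key

/-- An exponent `e t` with `∏_{i<t} x_i ≤ C(n,m) ^ e t`; `(t - 1).choose (m - 1)` is the number
of `m`-subsets of `{0, …, t-1}` containing a given element. -/
def expBound (m : ℕ) : ℕ → ℕ
  | 0 => 0
  | t + 1 => expBound m t + (1 + (t - 1).choose (m - 1) * expBound m t)

theorem le_pow_of_prod_below_le {n m : ℕ} {x : Fin n → ℕ} (hpos : ∀ i, 0 < x i)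
    (hmono : Monotone x) (hm : 1 ≤ m) (hmn : m ≤ n)
    (hsum : ∑ S ∈ powersetCard m univ, ((∏ i ∈ S, x i : ℕ) : ℚ)⁻¹ = 1) (t : Fin n)
    (ht : ∏ i ∈ below n t, x i ≤ n.choose m ^ expBound m t) :
    x t ≤ n.choose m ^ (1 + (t - 1 : ℕ).choose (m - 1) * expBound m t) :=
  calc x t ≤ n.choose m * (∏ i ∈ below n t, x i) ^ ((t - 1 : ℕ).choose (m - 1)) :=
        le_choose_mul_prod_below hpos hmono hm hmn hsum t
    _ ≤ n.choose m * (n.choose m ^ expBound m t) ^ ((t - 1 : ℕ).choose (m - 1)) := by gcongr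
    _ = n.choose m ^ (1 + (t - 1 : ℕ).choose (m - 1) * expBound m t) := by ring

theorem prod_below_le_pow_expBound {n m : ℕ} {x : Fin n → ℕ} (hpos : ∀ i, 0 < x i)
    (hmono : Monotone x) (hm : 1 ≤ m) (hmn : m ≤ n)
    (hsum : ∑ S ∈ powersetCard m univ, ((∏ i ∈ S, x i : ℕ) : ℚ)⁻¹ = 1) {t : ℕ} (ht : t ≤ n) :
    ∏ i ∈ below n t, x i ≤ n.choose m ^ expBound m t := by
  induction t with
  | zero => simp [below, expBound]
  | succ t ih =>
    have hx := le_pow_of_prod_below_le hpos hmono hm hmn hsum ⟨t, ht⟩ (ih (by omega))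
    rw [prod_below_succ ht, expBound, pow_add]
    exact Nat.mul_le_mul (ih (by omega)) hx

theorem expBound_of_le {m t : ℕ} (ht : t ≤ m) : expBound m t = t := by
  induction t with
  | zero => rfl
  | succ t ih =>
    rw [expBound, ih (by omega)]
    rcases Nat.eq_zero_or_pos t with rfl | htpos
    · simp
    · rw [Nat.choose_eq_zero_of_lt (by omega)]
      simp

theorem expBound_add_one_le {m t : ℕ} (hm : 1 ≤ m) (ht : m ≤ t) :
    expBound m t + 1 ≤ (m + 1) * 2 ^ (t - 1).choose m := by
  induction t, ht using Nat.le_induction with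
  | base => simp [expBound_of_le le_rfl, Nat.choose_eq_zero_of_lt (by omega : m - 1 < m)]
  | succ t ht ih =>
    set μ := (t - 1).choose (m - 1)
    have hμ : 1 ≤ μ := Nat.choose_pos (by omega)
    have hpascal : t.choose m = μ + (t - 1).choose m := by
      obtain ⟨s, rfl⟩ : ∃ s, t = s + 1 := ⟨t - 1, by omega⟩
      obtain ⟨l, rfl⟩ : ∃ l, m = l + 1 := ⟨m - 1, by omega⟩
      simpa [μ] using Nat.choose_succ_succ' s l
    calc expBound m (t + 1) + 1 ≤ (1 + μ) * (expBound m t + 1) := by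
          rw [expBound]
          nlinarith
      _ ≤ 2 ^ μ * ((m + 1) * 2 ^ (t - 1).choose m) :=
          Nat.mul_le_mul (by have := Nat.lt_two_pow_self (n := μ); omega) ih
      _ = (m + 1) * 2 ^ (t + 1 - 1).choose m := by
          rw [Nat.add_sub_cancel, hpascal, pow_add]
          ring

theorem expBound_lt_two_pow_choose {m n : ℕ} (hm : 1 ≤ m) (hmn : m < n) :
    expBound m n < 2 ^ n.choose m := by
  have hm_le : m ≤ (n - 1).choose (m - 1) :=
    calc m = m.choose (m - 1) := by
          obtain ⟨l, rfl⟩ : ∃ l, m = l + 1 := ⟨m - 1, by omega⟩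
          simp
      _ ≤ (n - 1).choose (m - 1) := Nat.choose_le_choose _ (by omega)
  have hpascal : n.choose m = (n - 1).choose (m - 1) + (n - 1).choose m := by
    obtain ⟨s, rfl⟩ : ∃ s, n = s + 1 := ⟨n - 1, by omega⟩
    obtain ⟨l, rfl⟩ : ∃ l, m = l + 1 := ⟨m - 1, by omega⟩
    simpa using Nat.choose_succ_succ' s l
  calc expBound m n < (m + 1) * 2 ^ (n - 1).choose m := expBound_add_one_le hm hmn.le
    _ ≤ 2 ^ (n - 1).choose (m - 1) * 2 ^ (n - 1).choose m := by
        gcongr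
        exact (Nat.lt_two_pow_self).trans_le (Nat.pow_le_pow_right two_pos hm_le)
    _ = 2 ^ n.choose m := by rw [hpascal, pow_add]

theorem finite_sols_and_ncard_le {n k : ℕ} (hkn : k < n) :
    (sols n k).Finite ∧ (sols n k).ncard ≤ n.choose k ^ expBound (n - k) n := by
  set m := n - k
  have hC : n.choose m = n.choose k := Nat.choose_symm hkn.le
  set bound : Fin n → ℕ := fun t =>
    n.choose m ^ (1 + (t - 1 : ℕ).choose (m - 1) * expBound m t)
  have hbox : sols n k ⊆ Fintype.piFinset fun t => Icc 1 (bound t) := by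
    intro x hx
    have hsum := sum_inv_prod_eq_one_of_mem_sols hx hkn.le
    obtain ⟨hpos, hmono, -⟩ := hx
    simp only [Fintype.coe_piFinset, Set.mem_pi, Set.mem_univ, coe_Icc, Set.mem_Icc,
      forall_const]
    exact fun t => ⟨hpos t, le_pow_of_prod_below_le hpos hmono (by omega) (by omega) hsum t
      (prod_below_le_pow_expBound hpos hmono (by omega) (by omega) hsum t.isLt.le)⟩
  refine ⟨(Fintype.piFinset _).finite_toSet.subset hbox,
    (Set.ncard_le_ncard hbox (Finset.finite_toSet _)).trans_eq ?_⟩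
  rw [Set.ncard_coe_finset, Fintype.card_piFinset, ← hC]
  simp only [Nat.card_Icc, Nat.add_sub_cancel, bound, prod_pow_eq_pow_sum]
  rw [Fin.sum_univ_eq_sum_range (fun t => 1 + (t - 1).choose (m - 1) * expBound m t),
    sum_range_induction _ (expBound m) rfl n (fun _ _ => rfl)]

/-- For `1 ≤ k < n`, the equation `σ_k = σ_n` has at least one solution in
nondecreasing positive integers, and the (finite) number of solutions is
less than `2 ^ (n * 2 ^ C(n,k))`. -/
theorem stmt0 (n k : ℕ) (hk : 1 ≤ k) (hkn : k < n) :
    (sols n k).Finite ∧ 1 ≤ (sols n k).ncard ∧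
      (sols n k).ncard < 2 ^ (n * 2 ^ n.choose k) := by
  obtain ⟨hfin, hcard⟩ := finite_sols_and_ncard_le hkn
  refine ⟨hfin, (Set.ncard_pos hfin).mpr (sols_nonempty hk hkn), hcard.trans_lt ?_⟩
  have hexp : expBound (n - k) n < 2 ^ n.choose k := by
    rw [← Nat.choose_symm hkn.le]
    exact expBound_lt_two_pow_choose (by omega) (by omega)
  calc n.choose k ^ expBound (n - k) n ≤ (2 ^ n) ^ expBound (n - k) n :=
        Nat.pow_le_pow_left (Nat.choose_le_two_pow n k) _
    _ = 2 ^ (n * expBound (n - k) n) := (pow_mul 2 n _).symm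
    _ < 2 ^ (n * 2 ^ n.choose k) :=
        Nat.pow_lt_pow_right (by norm_num) (Nat.mul_lt_mul_of_pos_left hexp (by omega))
end

section
/- Let k ≥ 1 be an integer and x ≥ k+1 an integer. For each n with k < n ≤ x, let N^{(0)}_{k,n} be the maximum of x_1·x_2·…·x_n over all n-tuples (x_1,…,x_n) of positive integers with x_1 ≤ … ≤ x_n and σ_k(x_1,…,x_n) = σ_n(x_1,…,x_n). Then Σ_{k<n≤x} f_k(n) ≤ Σ_{l ≤ max_{k<n≤x} N^{(0)}_{k,n}} f(l), where f(l) denotes the number of factorizations of l into integer factors larger than 1 with the order of factors not counting (and f(1)=1). -/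
/-- The number of factorizations of `l` into factors larger than `1`, where
the order of the factors does not count (so `f 1 = 1`, via the empty factorization). -/
noncomputable def numFactorizations (l : ℕ) : ℕ :=
  Set.ncard {m : Multiset ℕ | (∀ a ∈ m, 1 < a) ∧ m.prod = l}

/-!
Send a solution `x_1 ≤ … ≤ x_n` of `σ_k = σ_n` to the multiset of its entries larger than one:
this is a factorization of `x_1 ⋯ x_n ≤ max N`. The map is injective on all solutions with
`n > k` at once: adjoining a one to a multiset `s` of positive integers keeps the product but
raises `σ_k` by `σ_{k-1}(s) > 0`, so the number of ones in a solution is determined by its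
remaining entries.
-/

namespace Multiset

section CommSemiring

variable {R : Type*} [CommSemiring R]

theorem esymm_card (s : Multiset R) : s.esymm (card s) = s.prod := by
  simp [Multiset.esymm]

theorem esymm_cons_succ_s2 (a : R) (s : Multiset R) (k : ℕ) :
    (a ::ₘ s).esymm (k + 1) = s.esymm (k + 1) + a * s.esymm k := by
  simp [Multiset.esymm, map_map, sum_map_mul_left]

end CommSemiring

section OrderedSemiring

variable {R : Type*} [CommSemiring R] [PartialOrder R] [IsStrictOrderedRing R]

theorem esymm_nonneg {s : Multiset R} (hs : ∀ a ∈ s, 0 ≤ a) (k : ℕ) : 0 ≤ s.esymm k :=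
  sum_nonneg fun _ hp ↦ by
    obtain ⟨t, ht, rfl⟩ := mem_map.mp hp
    exact prod_nonneg fun a ha ↦ hs a (mem_of_le (mem_powersetCard.mp ht).1 ha)

theorem esymm_pos {s : Multiset R} (hs : ∀ a ∈ s, 0 < a) {k : ℕ} (hk : k ≤ card s) :
    0 < s.esymm k := by
  obtain ⟨t, ht⟩ := card_pos_iff_exists_mem.mp (by simpa using Nat.choose_pos hk :
    0 < card (s.powersetCard k))
  have hts := (mem_powersetCard.mp ht).1
  calc 0 < t.prod := prod_pos fun a ha ↦ hs a (mem_of_le hts ha)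
    _ ≤ s.esymm k := single_le_sum (fun _ hp ↦ by
          obtain ⟨u, hu, rfl⟩ := mem_map.mp hp
          exact prod_nonneg fun a ha ↦ (hs a (mem_of_le (mem_powersetCard.mp hu).1 ha)).le)
        _ (mem_map_of_mem _ ht)

theorem esymm_lt_esymm_replicate_one_add {s : Multiset R} (hs : ∀ a ∈ s, 0 < a) {k : ℕ}
    (hk : k ≤ card s) {d : ℕ} (hd : d ≠ 0) :
    s.esymm (k + 1) < (replicate d 1 + s).esymm (k + 1) := by
  obtain ⟨d, rfl⟩ := Nat.exists_eq_succ_of_ne_zero hd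
  induction d with
  | zero => simpa [esymm_cons_succ_s2] using esymm_pos hs hk
  | succ d ih =>
    have hnonneg : ∀ a ∈ replicate (d + 1) 1 + s, 0 ≤ a := by
      intro a ha
      rcases mem_add.mp ha with ha | ha
      · rw [eq_of_mem_replicate ha]; exact zero_le_one
      · exact (hs a ha).le
    rw [replicate_succ, cons_add, esymm_cons_succ_s2, one_mul]
    exact (ih d.succ_ne_zero).trans_le (le_add_of_nonneg_right (esymm_nonneg hnonneg k))

end OrderedSemiring

theorem replicate_count_one_add_filter_one_lt {s : Multiset ℕ} (hs : ∀ a ∈ s, 0 < a) :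
    replicate (count 1 s) 1 + s.filter (1 < ·) = s := by
  conv_rhs => rw [← filter_add_not (fun a ↦ 1 < a) s]
  rw [add_comm, ← filter_eq']
  congr 1
  exact filter_congr fun a ha ↦ by have := hs a ha; omega

theorem prod_filter_one_lt {s : Multiset ℕ} (hs : ∀ a ∈ s, 0 < a) :
    (s.filter (1 < ·)).prod = s.prod := by
  conv_rhs => rw [← replicate_count_one_add_filter_one_lt hs]
  simp

theorem eq_of_filter_one_lt_eq {k : ℕ} {s t : Multiset ℕ} (hs : ∀ a ∈ s, 0 < a)
    (ht : ∀ a ∈ t, 0 < a) (hks : k ≤ card s) (hkt : k ≤ card t)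
    (hse : s.esymm (k + 1) = s.prod) (hte : t.esymm (k + 1) = t.prod)
    (h : s.filter (1 < ·) = t.filter (1 < ·)) : s = t := by
  wlog hle : count 1 s ≤ count 1 t generalizing s t
  · exact (this ht hs hkt hks hte hse h.symm (le_of_not_ge hle)).symm
  obtain ⟨d, hd⟩ := Nat.exists_eq_add_of_le hle
  have hts : t = replicate d 1 + s := by
    rw [← replicate_count_one_add_filter_one_lt ht, ← replicate_count_one_add_filter_one_lt hs,
      hd, replicate_add, ← h, add_comm (replicate (count 1 s) 1), add_assoc]
  obtain rfl | hd0 := eq_or_ne d 0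
  · simpa using hts.symm
  have := esymm_lt_esymm_replicate_one_add hs hks hd0
  rw [← hts, hte, hts, prod_add, prod_replicate, one_pow, one_mul, ← hse] at this
  exact absurd this (lt_irrefl _)

theorem finite_setOf_prod_eq (l : ℕ) :
    {m : Multiset ℕ | (∀ a ∈ m, 1 < a) ∧ m.prod = l}.Finite := by
  -- every factor lies in `[2, l]`, and there are fewer than `l` of them
  refine (Finset.Iic (l • (Finset.Icc 2 l).val)).finite_toSet.subset ?_
  rintro m ⟨hm, rfl⟩
  have hcard : card m < m.prod :=
    Nat.lt_two_pow_self.trans_le (pow_card_le_prod fun a ha ↦ hm a ha)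
  simp only [Finset.coe_Iic, Set.mem_Iic, le_iff_count]
  intro a
  by_cases ha : a ∈ m
  · have hmem : a ∈ Finset.Icc 2 m.prod :=
      Finset.mem_Icc.mpr ⟨hm a ha, single_le_prod (fun b hb ↦ (hm b hb).le) a ha⟩
    rw [count_nsmul, count_eq_one_of_mem (Finset.nodup _) hmem, mul_one]
    exact (count_le_card a m).trans hcard.le
  · simp [count_eq_zero.mpr ha]

end Multiset

theorem Finset.sum_ncard_le_sum_ncard_of_injOn {ι κ α β : Type*} {I : Finset ι} {J : Finset κ}
    {A : ι → Set α} {B : κ → Set β} (f : α → β) (hA : (I : Set ι).PairwiseDisjoint A)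
    (hB : ∀ j ∈ J, (B j).Finite) (hf : ∀ i ∈ I, ∀ a ∈ A i, ∃ j ∈ J, f a ∈ B j)
    (hf_inj : ∀ i ∈ I, ∀ i' ∈ I, ∀ a ∈ A i, ∀ a' ∈ A i', f a = f a' → a = a') :
    ∑ i ∈ I, (A i).ncard ≤ ∑ j ∈ J, (B j).ncard := by
  have hmaps : Set.MapsTo f (⋃ i ∈ I, A i) (⋃ j ∈ J, B j) := fun a ha ↦ by
    obtain ⟨i, hi, ha⟩ := Set.mem_iUnion₂.mp ha
    obtain ⟨j, hj, hfa⟩ := hf i hi a ha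
    exact Set.mem_iUnion₂_of_mem hj hfa
  have hinj : Set.InjOn f (⋃ i ∈ I, A i) := fun a ha a' ha' ↦ by
    obtain ⟨i, hi, ha⟩ := Set.mem_iUnion₂.mp ha
    obtain ⟨i', hi', ha'⟩ := Set.mem_iUnion₂.mp ha'
    exact hf_inj i hi i' hi' a ha a' ha'
  have hV : (⋃ j ∈ J, B j).Finite := J.finite_toSet.biUnion hB
  have hU : (⋃ i ∈ I, A i).Finite := Set.Finite.of_finite_image (hV.subset hmaps.image_subset) hinj
  calc ∑ i ∈ I, (A i).ncard = (⋃ i ∈ I, A i).ncard := by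
        rw [← finsum_mem_coe_finset, ← I.finite_toSet.ncard_biUnion _ hA]
        · simp
        · exact fun i hi ↦ hU.subset (Set.subset_biUnion_of_mem (u := A) hi)
    _ ≤ (⋃ j ∈ J, B j).ncard := Set.ncard_le_ncard_of_injOn f hmaps hinj hV
    _ ≤ ∑ j ∈ J, (B j).ncard := J.set_ncard_biUnion_le B

theorem injOn_univ_val_map_monotone {α : Type*} [LinearOrder α] (n : ℕ) :
    Set.InjOn (fun f : Fin n → α ↦ Finset.univ.val.map f) {f | Monotone f} := by
  intro f hf g hg h
  simp only [Fin.univ_val_map] at h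
  exact List.ofFn_injective ((Quotient.exact h).eq_of_sortedLE hf.sortedLE_ofFn hg.sortedLE_ofFn)

theorem esymm_univ_val_map_eq_prod_of_mem_sols {n k : ℕ} {xs : Fin n → ℕ} (hxs : xs ∈ sols n k) :
    (Finset.univ.val.map xs).esymm k = (Finset.univ.val.map xs).prod := by
  have hesymm (j : ℕ) : esymm n j xs = (Finset.univ.val.map xs).esymm j :=
    (Finset.esymm_map_val xs Finset.univ j).symm
  rw [← hesymm, hxs.2.2, hesymm]
  simpa using Multiset.esymm_card (Finset.univ.val.map xs)

theorem stmt2_general (k x : ℕ) (hk : 1 ≤ k) (N : ℕ → ℕ)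
    (hN : ∀ n, k < n → n ≤ x →
      IsGreatest {p | ∃ xs ∈ sols n k, p = ∏ i, xs i} (N n)) :
    ∑ n ∈ Finset.Ioc k x, (sols n k).ncard ≤
      ∑ l ∈ Finset.Icc 1 ((Finset.Ioc k x).sup N), numFactorizations l := by
  obtain ⟨k, rfl⟩ := Nat.exists_eq_add_of_le' hk
  let A (n : ℕ) : Set (Multiset ℕ) := (Finset.univ.val.map ·) '' sols n (k + 1)
  have hA : ∀ n ∈ Finset.Ioc (k + 1) x, ∀ s ∈ A n, Multiset.card s = n ∧ (∀ a ∈ s, 0 < a) ∧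
      s.esymm (k + 1) = s.prod ∧ s.prod ∈ Finset.Icc 1 ((Finset.Ioc (k + 1) x).sup N) := by
    rintro n hn _ ⟨xs, hxs, rfl⟩
    have hpos : ∀ a ∈ Finset.univ.val.map xs, 0 < a := by simpa using hxs.1
    obtain ⟨hkn, hnx⟩ := Finset.mem_Ioc.mp hn
    exact ⟨by simp, hpos, esymm_univ_val_map_eq_prod_of_mem_sols hxs, Finset.mem_Icc.mpr
      ⟨Multiset.prod_pos hpos, ((hN n hkn hnx).2 ⟨xs, hxs, rfl⟩).trans (Finset.le_sup hn)⟩⟩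
  calc ∑ n ∈ Finset.Ioc (k + 1) x, (sols n (k + 1)).ncard
      = ∑ n ∈ Finset.Ioc (k + 1) x, (A n).ncard := Finset.sum_congr rfl fun n _ ↦
        (((injOn_univ_val_map_monotone n).mono fun _ h ↦ h.2.1).ncard_image).symm
    _ ≤ _ := by
      refine Finset.sum_ncard_le_sum_ncard_of_injOn (·.filter (1 < ·))
        (fun n hn m hm hnm ↦ ?_) (fun l _ ↦ Multiset.finite_setOf_prod_eq l)
        (fun n hn s hs ↦ ?_) (fun n hn m hm s hs t ht hst ↦ ?_)
      · exact Set.disjoint_left.mpr fun s hsn hsm ↦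
          hnm ((hA n hn s hsn).1.symm.trans (hA m hm s hsm).1)
      · obtain ⟨-, hpos, -, hprod⟩ := hA n hn s hs
        exact ⟨s.prod, hprod, fun a ha ↦ (Multiset.mem_filter.mp ha).2,
          Multiset.prod_filter_one_lt hpos⟩
      · obtain ⟨hcs, hs0, hse, -⟩ := hA n hn s hs
        obtain ⟨hct, ht0, hte, -⟩ := hA m hm t ht
        exact Multiset.eq_of_filter_one_lt_eq hs0 ht0 (by grind) (by grind) hse hte hst

/-- If for each `k < n ≤ x`, `N n` is the maximal product `x_1 ⋯ x_n` over all
solutions of `σ_k = σ_n`, then `Σ_{k<n≤x} f_k(n) ≤ Σ_{l ≤ max_{k<n≤x} N n} f(l)`. -/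
theorem stmt2 (k x : ℕ) (hk : 1 ≤ k) (hx : k + 1 ≤ x) (N : ℕ → ℕ)
    (hN : ∀ n, k < n → n ≤ x →
      IsGreatest {p | ∃ xs ∈ sols n k, p = ∏ i, xs i} (N n)) :
    ∑ n ∈ Finset.Ioc k x, (sols n k).ncard ≤
      ∑ l ∈ Finset.Icc 1 ((Finset.Ioc k x).sup N), numFactorizations l :=
  stmt2_general k x hk N hN
end

section
/- For every n ≥ 2, the sequence (v_n) satisfies the recursion v_{n+1} = v_n² + v_n·v_{n−1} + v_{n−1}² − v_{n−1}³ − v_n − v_{n−1} + 1. -/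
/-- `v` is the sequence defined by `v 1 = 1`, `v 2 = 2`, and for `n ≥ 2`,
`v (n+1) = 1 + (Σ_{1≤i≤n} 1/v_i) / (1 - Σ_{1≤i<j≤n} 1/(v_i v_j))`.
These equations determine `v n` uniquely for all `n ≥ 1`. -/
def vSpec (v : ℕ → ℚ) : Prop :=
  v 1 = 1 ∧ v 2 = 2 ∧ ∀ n, 2 ≤ n →
    v (n + 1) = 1 + (∑ i ∈ Finset.Icc 1 n, 1 / v i) /
      (1 - ∑ p ∈ (Finset.Icc 1 n ×ˢ Finset.Icc 1 n).filter (fun p => p.1 < p.2),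
        1 / (v p.1 * v p.2))

/-!
With `S = invSum v` and `Q = invDenom v`, the defining recursion reads
`S n = (v (n+1) - 1) * Q n`. Appending the index `n+1` gives `S (n+1) = S n + 1/v (n+1)` and
`Q (n+1) = Q n - S n / v (n+1) = Q n / v (n+1)`, hence
`v (n+2) = 1 + v (n+1) (v (n+1) - 1) + 1 / Q n`. The same identity one step earlier gives
`1 / Q n = v n / Q (n-1) = v n (v (n+1) - 1 - v n (v n - 1))`, and substituting yields the cubic
recursion. Positivity of `Q n` (needed to divide) is carried along by induction.
-/

open Finset

theorem sum_filter_lt_Icc_succ {M : Type*} [AddCommMonoid M] (f : ℕ × ℕ → M) (n : ℕ) :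
    ∑ p ∈ (Icc 1 (n + 1) ×ˢ Icc 1 (n + 1)).filter (fun p => p.1 < p.2), f p =
      ∑ p ∈ (Icc 1 n ×ˢ Icc 1 n).filter (fun p => p.1 < p.2), f p +
        ∑ i ∈ Icc 1 n, f (i, n + 1) := by
  simp only [sum_filter, sum_product]
  have hlast : ∑ j ∈ Icc 1 (n + 1), (if n + 1 < j then f (n + 1, j) else 0) = 0 :=
    sum_eq_zero fun j hj => if_neg (by simp at hj; omega)
  rw [sum_Icc_succ_top (by omega), hlast, add_zero, ← sum_add_distrib]
  refine sum_congr rfl fun i hi => ?_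
  rw [sum_Icc_succ_top (by omega), if_pos (by simp at hi; omega)]

section

variable {K : Type*} [Field K] (v : ℕ → K)

def invSum (n : ℕ) : K := ∑ i ∈ Icc 1 n, 1 / v i

def invDenom (n : ℕ) : K :=
  1 - ∑ p ∈ (Icc 1 n ×ˢ Icc 1 n).filter (fun p => p.1 < p.2), 1 / (v p.1 * v p.2)

theorem invSum_succ (n : ℕ) : invSum v (n + 1) = invSum v n + 1 / v (n + 1) :=
  sum_Icc_succ_top (by omega) _

theorem invDenom_succ (n : ℕ) :
    invDenom v (n + 1) = invDenom v n - invSum v n / v (n + 1) := by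
  simp only [invDenom, invSum, sum_filter_lt_Icc_succ, sum_div, div_div]
  ring

end

namespace vSpec

variable {v : ℕ → ℚ}

/-- The recursion also holds for `n = 0, 1`, where the sums are empty or nearly so. -/
theorem apply_succ (hv : vSpec v) (n : ℕ) : v (n + 1) = 1 + invSum v n / invDenom v n := by
  obtain ⟨h1, h2, hrec⟩ := hv
  rcases n with _ | _ | n
  · simp [invSum, h1]
  · simp [invSum, invDenom, h1, h2, filter_singleton]
    norm_num
  · exact hrec _ (by omega)

theorem invSum_eq_mul_invDenom (hv : vSpec v) {n : ℕ} (hQ : invDenom v n ≠ 0) :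
    invSum v n = (v (n + 1) - 1) * invDenom v n := by
  rw [hv.apply_succ n]
  field_simp
  ring

theorem invDenom_succ_eq_div_of_ne_zero (hv : vSpec v) {n : ℕ} (hQ : invDenom v n ≠ 0)
    (hvn : v (n + 1) ≠ 0) : invDenom v (n + 1) = invDenom v n / v (n + 1) := by
  rw [eq_div_iff hvn, invDenom_succ, hv.invSum_eq_mul_invDenom hQ]
  field_simp
  ring

theorem invDenom_pos_and_invSum_nonneg (hv : vSpec v) (n : ℕ) :
    0 < invDenom v n ∧ 0 ≤ invSum v n := by
  induction n with
  | zero => simp [invDenom, invSum]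
  | succ n ih =>
    obtain ⟨hQ, hS⟩ := ih
    have hv1 : 1 ≤ v (n + 1) := by
      rw [hv.apply_succ]
      linarith [div_nonneg hS hQ.le]
    rw [hv.invDenom_succ_eq_div_of_ne_zero hQ.ne' (by positivity), invSum_succ]
    exact ⟨by positivity, by positivity⟩

theorem invDenom_pos (hv : vSpec v) (n : ℕ) : 0 < invDenom v n :=
  (hv.invDenom_pos_and_invSum_nonneg n).1

theorem one_le_apply_succ (hv : vSpec v) (n : ℕ) : 1 ≤ v (n + 1) := by
  obtain ⟨hQ, hS⟩ := hv.invDenom_pos_and_invSum_nonneg n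
  rw [hv.apply_succ]
  linarith [div_nonneg hS hQ.le]

theorem invDenom_succ_eq_div (hv : vSpec v) (n : ℕ) :
    invDenom v (n + 1) = invDenom v n / v (n + 1) :=
  hv.invDenom_succ_eq_div_of_ne_zero (hv.invDenom_pos n).ne' (by linarith [hv.one_le_apply_succ n])

theorem apply_add_two (hv : vSpec v) (n : ℕ) :
    v (n + 2) = 1 + v (n + 1) * (v (n + 1) - 1) + 1 / invDenom v n := by
  have hQ := (hv.invDenom_pos n).ne'
  have hv1 : v (n + 1) ≠ 0 := by linarith [hv.one_le_apply_succ n]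
  rw [hv.apply_succ (n + 1), invSum_succ, hv.invDenom_succ_eq_div, hv.invSum_eq_mul_invDenom hQ]
  field_simp
  ring

theorem one_div_invDenom_succ (hv : vSpec v) (n : ℕ) :
    1 / invDenom v (n + 1) = v (n + 1) * (v (n + 2) - 1 - v (n + 1) * (v (n + 1) - 1)) := by
  rw [hv.apply_add_two, hv.invDenom_succ_eq_div, one_div_div]
  ring

end vSpec

/-- For `n ≥ 2`, `v_{n+1} = v_n² + v_n v_{n−1} + v_{n−1}² − v_{n−1}³ − v_n − v_{n−1} + 1`. -/
theorem stmt4 (v : ℕ → ℚ) (hv : vSpec v) (n : ℕ) (hn : 2 ≤ n) :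
    v (n + 1) = v n ^ 2 + v n * v (n - 1) + v (n - 1) ^ 2 - v (n - 1) ^ 3
      - v n - v (n - 1) + 1 := by
  obtain ⟨k, rfl⟩ := Nat.exists_eq_add_of_le' hn
  rw [show k + 2 - 1 = k + 1 by omega, hv.apply_add_two (k + 1), hv.one_div_invDenom_succ k]
  ring
end

section
/- For every n ≥ 2, the sequence (v_n) satisfies v_{n+1} = 1 + (Π_{1≤i≤n} v_i)·(Σ_{1≤i≤n} 1/v_i). Equivalently, Σ_{1≤i<j≤n} 1/(v_i v_j) = 1 − 1/(v_1·v_2·…·v_n). -/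
/-!
Write `P = v₁ ⋯ vₙ`, `S = Σ 1/vᵢ` and `e = Σ_{i<j} 1/(vᵢ vⱼ)`. By induction `e = 1 - 1/P`:
passing from `n` to `n + 1` adds `S / v_{n+1}` to `e`, and once `e = 1 - 1/P` the recurrence
reads `v_{n+1} = 1 + P S`, so `1/P - S/(1 + P S) = 1/(P (1 + P S))` closes the induction.
-/

open Finset

def pairsIcc (n : ℕ) : Finset (ℕ × ℕ) :=
  (Icc 1 n ×ˢ Icc 1 n).filter (fun p => p.1 < p.2)

lemma pairsIcc_succ (n : ℕ) :
    pairsIcc (n + 1) = pairsIcc n ∪ (Icc 1 n).image (fun i => (i, n + 1)) := by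
  ext ⟨a, b⟩
  simp only [pairsIcc, mem_filter, mem_product, mem_Icc, mem_union, mem_image, Prod.mk.injEq]
  constructor
  · rintro ⟨⟨⟨ha1, ha2⟩, hb1, hb2⟩, hab⟩
    by_cases hb : b = n + 1
    · exact Or.inr ⟨a, ⟨ha1, by omega⟩, rfl, hb.symm⟩
    · left; omega
  · rintro (⟨⟨⟨ha1, ha2⟩, hb1, hb2⟩, hab⟩ | ⟨i, ⟨hi1, hi2⟩, rfl, rfl⟩) <;>
      omega

lemma sum_pairsIcc_succ {M : Type*} [AddCommMonoid M] (f : ℕ → ℕ → M) (n : ℕ) :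
    ∑ p ∈ pairsIcc (n + 1), f p.1 p.2 =
      ∑ p ∈ pairsIcc n, f p.1 p.2 + ∑ i ∈ Icc 1 n, f i (n + 1) := by
  have hdisj : Disjoint (pairsIcc n) ((Icc 1 n).image (fun i => (i, n + 1))) := by
    rw [disjoint_left]
    intro p hp hp'
    obtain ⟨i, -, rfl⟩ := mem_image.mp hp'
    simp only [pairsIcc, mem_filter, mem_product, mem_Icc] at hp
    omega
  rw [pairsIcc_succ, sum_union hdisj, sum_image (fun _ _ _ _ h => (Prod.mk.inj h).1)]

lemma sum_pairsIcc_succ_one_div {K : Type*} [Field K] {v : ℕ → K} {n : ℕ}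
    (hP : ∏ i ∈ Icc 1 n, v i ≠ 0)
    (hsum : ∑ p ∈ pairsIcc n, 1 / (v p.1 * v p.2) = 1 - 1 / ∏ i ∈ Icc 1 n, v i)
    (hsucc : v (n + 1) = 1 + (∏ i ∈ Icc 1 n, v i) * ∑ i ∈ Icc 1 n, 1 / v i)
    (hsucc_ne : v (n + 1) ≠ 0) :
    ∑ p ∈ pairsIcc (n + 1), 1 / (v p.1 * v p.2) = 1 - 1 / ∏ i ∈ Icc 1 (n + 1), v i := by
  have hsum_div :
      ∑ i ∈ Icc 1 n, 1 / (v i * v (n + 1)) = (∑ i ∈ Icc 1 n, 1 / v i) / v (n + 1) := by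
    rw [sum_div]
    exact sum_congr rfl fun i _ => (div_div 1 (v i) (v (n + 1))).symm
  rw [sum_pairsIcc_succ (fun i j => 1 / (v i * v j)), hsum, hsum_div, prod_Icc_succ_top (by omega)]
  rw [hsucc] at hsucc_ne ⊢
  field_simp
  ring

namespace vSpec

variable {v : ℕ → ℚ}

lemma succ_eq (hv : vSpec v) {n : ℕ} (hn : 2 ≤ n)
    (hsum : ∑ p ∈ pairsIcc n, 1 / (v p.1 * v p.2) = 1 - 1 / ∏ i ∈ Icc 1 n, v i) :
    v (n + 1) = 1 + (∏ i ∈ Icc 1 n, v i) * ∑ i ∈ Icc 1 n, 1 / v i := by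
  rw [hv.2.2 n hn, ← pairsIcc, hsum, sub_sub_cancel, div_div_eq_mul_div, div_one, mul_comm]

lemma pos_and_sum_pairsIcc (hv : vSpec v) {n : ℕ} (hn : 2 ≤ n) :
    (∀ i ∈ Icc 1 n, 0 < v i) ∧
      ∑ p ∈ pairsIcc n, 1 / (v p.1 * v p.2) = 1 - 1 / ∏ i ∈ Icc 1 n, v i := by
  induction n, hn using Nat.le_induction with
  | base =>
    have hIcc : Icc 1 2 = {1, 2} := by decide
    have hpairs : pairsIcc 2 = {(1, 2)} := by decide
    simp only [hIcc, hpairs, mem_insert, mem_singleton, forall_eq_or_imp, forall_eq,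
      sum_singleton, prod_pair (by decide : (1 : ℕ) ≠ 2), hv.1, hv.2.1]
    norm_num
  | succ n hn ih =>
    obtain ⟨hpos, hsum⟩ := ih
    have hsucc := hv.succ_eq hn hsum
    have hsucc_pos : 0 < v (n + 1) := by
      rw [hsucc]
      have hS : 0 < ∑ i ∈ Icc 1 n, 1 / v i :=
        sum_pos (fun i hi => one_div_pos.mpr (hpos i hi)) ⟨1, mem_Icc.mpr ⟨le_rfl, by omega⟩⟩
      have hP := prod_pos hpos
      positivity
    refine ⟨fun i hi => ?_, sum_pairsIcc_succ_one_div (prod_pos hpos).ne' hsum hsucc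
      hsucc_pos.ne'⟩
    obtain ⟨hi1, hi2⟩ := mem_Icc.mp hi
    rcases hi2.lt_or_eq with hlt | rfl
    · exact hpos i (mem_Icc.mpr ⟨hi1, Nat.lt_succ_iff.mp hlt⟩)
    · exact hsucc_pos

end vSpec

/-- For `n ≥ 2`, `v_{n+1} = 1 + (Π_{1≤i≤n} v_i)·(Σ_{1≤i≤n} 1/v_i)`; equivalently,
`Σ_{1≤i<j≤n} 1/(v_i v_j) = 1 − 1/(v_1 ⋯ v_n)`. -/
theorem stmt6 (v : ℕ → ℚ) (hv : vSpec v) (n : ℕ) (hn : 2 ≤ n) :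
    v (n + 1) = 1 + (∏ i ∈ Finset.Icc 1 n, v i) * (∑ i ∈ Finset.Icc 1 n, 1 / v i) ∧
    ∑ p ∈ (Finset.Icc 1 n ×ˢ Finset.Icc 1 n).filter (fun p => p.1 < p.2),
        1 / (v p.1 * v p.2) = 1 - 1 / ∏ i ∈ Finset.Icc 1 n, v i := by
  have hsum := (hv.pos_and_sum_pairsIcc hn).2
  exact ⟨hv.succ_eq hn hsum, hsum⟩
end

section
/- Let x_1 ≥ x_2 ≥ … ≥ x_n > 0 and y_1,…,y_n ≥ 0 be real numbers such that for every 2 ≤ m ≤ n one has x_m + x_{m+1} + … + x_n ≥ y_m + y_{m+1} + … + y_n, and x_1 + … + x_n = y_1 + … + y_n. Then Σ_{1≤i<j≤n} x_i x_j ≥ Σ_{1≤i<j≤n} y_i y_j, with equality if and only if y_i = x_i for every 1 ≤ i ≤ n. -/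
/-!
Write `d = y - x`. Since `2 Σ_{i<j} f_i f_j = (Σ f)² - Σ f²` and the totals agree,
`2 (Σ_{i<j} x_i x_j - Σ_{i<j} y_i y_j) = Σ d_i² + 2 Σ x_i d_i`. The tail conditions say that
every prefix sum of `d` is nonnegative, so Abel summation against the nonincreasing, nonnegative
`x` gives `Σ x_i d_i ≥ 0`. Hence the gap is at least `Σ d_i²`, which vanishes only when `y = x`.
-/

open Finset

theorem Finset.sq_sum_eq_sum_sq_add_two_mul_sum_lt {ι R : Type*} [Fintype ι] [LinearOrder ι]
    [CommSemiring R] (f : ι → R) :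
    (∑ i, f i) ^ 2 =
      ∑ i, f i ^ 2 + 2 * ∑ p ∈ univ.filter (fun p : ι × ι => p.1 < p.2), f p.1 * f p.2 := by
  have htri : ∀ p : ι × ι, f p.1 * f p.2 =
      (if p.1 = p.2 then f p.1 * f p.2 else 0) + (if p.1 < p.2 then f p.1 * f p.2 else 0) +
        (if p.2 < p.1 then f p.1 * f p.2 else 0) := by
    rintro ⟨i, j⟩
    rcases lt_trichotomy i j with h | rfl | h
    · simp [h, h.ne, h.not_gt]
    · simp
    · simp [h, h.ne', h.not_gt]
  have hdiag : ∑ p : ι × ι, (if p.1 = p.2 then f p.1 * f p.2 else 0) = ∑ i, f i ^ 2 := by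
    simp [Fintype.sum_prod_type, sq]
  have hswap : ∑ p ∈ univ.filter (fun p : ι × ι => p.2 < p.1), f p.1 * f p.2 =
      ∑ p ∈ univ.filter (fun p : ι × ι => p.1 < p.2), f p.1 * f p.2 :=
    sum_nbij' Prod.swap Prod.swap (by simp) (by simp) (by simp) (by simp) (by simp [mul_comm])
  rw [sq, sum_mul_sum, ← Fintype.sum_prod_type', Fintype.sum_congr _ _ htri, sum_add_distrib,
    sum_add_distrib, hdiag, ← sum_filter, ← sum_filter, hswap, two_mul, add_assoc]

theorem Finset.sum_mul_nonneg_of_antitoneOn {ι R : Type*} [LinearOrder ι] [CommRing R]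
    [PartialOrder R] [IsOrderedRing R] (s : Finset ι) {x d : ι → R} (hx : AntitoneOn x s)
    (hx₀ : ∀ i ∈ s, 0 ≤ x i) (hd : ∀ m ∈ s, 0 ≤ ∑ i ∈ s with i ≤ m, d i) :
    0 ≤ ∑ i ∈ s, x i * d i := by
  classical
  -- Split off the largest index `a`: `Σ x d = x a * Σ d + Σ_{i < a} (x i - x a) * d i`, and
  -- `x - x a` is again antitone and nonnegative on the remaining indices.
  induction s using Finset.induction_on_max generalizing x with
  | empty => simp
  | insert a s hlt ih =>
    have ha : a ∉ s := fun h => lt_irrefl a (hlt a h)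
    have hxa : ∀ i ∈ s, x a ≤ x i := fun i hi =>
      hx (mem_insert_of_mem hi) (mem_insert_self a s) (hlt i hi).le
    have hhead : ∀ m ∈ s, ∑ i ∈ insert a s with i ≤ m, d i = ∑ i ∈ s with i ≤ m, d i := by
      intro m hm
      rw [filter_insert, if_neg (hlt m hm).not_ge]
    have htotal : ∑ i ∈ insert a s with i ≤ a, d i = ∑ i ∈ insert a s, d i := by
      refine sum_congr (filter_true_of_mem fun i hi => ?_) fun _ _ => rfl
      rcases mem_insert.1 hi with rfl | hi
      exacts [le_rfl, (hlt i hi).le]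
    have hrest : 0 ≤ ∑ i ∈ s, (x i - x a) * d i :=
      ih (fun i hi j hj hij => sub_le_sub_right (hx (mem_insert_of_mem hi)
          (mem_insert_of_mem hj) hij) _)
        (fun i hi => sub_nonneg.2 (hxa i hi))
        (fun m hm => hhead m hm ▸ hd m (mem_insert_of_mem hm))
    calc (0 : R) ≤ x a * ∑ i ∈ insert a s, d i + ∑ i ∈ s, (x i - x a) * d i :=
          add_nonneg (mul_nonneg (hx₀ a (mem_insert_self a s))
            (htotal ▸ hd a (mem_insert_self a s))) hrest
      _ = ∑ i ∈ insert a s, x i * d i := by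
          rw [sum_insert ha, mul_add, mul_sum, sum_congr rfl fun i _ => sub_mul (x i) (x a) (d i),
            sum_sub_distrib, sum_insert ha]
          ring

theorem Fin.prefix_sum_nonneg_of_suffix_sum_nonpos {n : ℕ} {R : Type*} [AddCommGroup R]
    [PartialOrder R] [IsOrderedAddMonoid R] (d : Fin n → R)
    (htail : ∀ m : ℕ, 1 ≤ m → m ≤ n - 1 →
      ∑ i ∈ univ.filter (fun i : Fin n => m ≤ (i : ℕ)), d i ≤ 0)
    (htotal : ∑ i, d i = 0) (m : Fin n) :
    0 ≤ ∑ i ∈ univ.filter (fun i => i ≤ m), d i := by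
  have hsplit := sum_filter_add_sum_filter_not univ (fun i => i ≤ m) d
  have hcompl :
      univ.filter (fun i => ¬ i ≤ m) = univ.filter (fun i : Fin n => (m : ℕ) + 1 ≤ i) :=
    filter_congr fun i _ => by rw [not_le, Fin.lt_def]; omega
  have htail_m : ∑ i ∈ univ.filter (fun i : Fin n => (m : ℕ) + 1 ≤ i), d i ≤ 0 := by
    by_cases hm : (m : ℕ) + 1 ≤ n - 1
    · exact htail _ (Nat.le_add_left 1 _) hm
    · rw [filter_false_of_mem fun i _ => by omega, sum_empty]
  rw [hcompl, htotal] at hsplit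
  rw [← neg_nonpos, neg_eq_of_add_eq_zero_right hsplit]
  exact htail_m

theorem stmt12_general (n : ℕ) (x y : Fin n → ℝ)
    (hxanti : ∀ i j : Fin n, i ≤ j → x j ≤ x i) (hxpos : ∀ i, 0 < x i)
    (htail : ∀ m : ℕ, 1 ≤ m → m ≤ n - 1 →
      ∑ i ∈ Finset.univ.filter (fun i : Fin n => m ≤ (i : ℕ)), y i ≤
        ∑ i ∈ Finset.univ.filter (fun i : Fin n => m ≤ (i : ℕ)), x i)
    (hsum : ∑ i, x i = ∑ i, y i) :
    ∑ p ∈ Finset.univ.filter (fun p : Fin n × Fin n => p.1 < p.2), y p.1 * y p.2 ≤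
      ∑ p ∈ Finset.univ.filter (fun p : Fin n × Fin n => p.1 < p.2), x p.1 * x p.2 ∧
    (∑ p ∈ Finset.univ.filter (fun p : Fin n × Fin n => p.1 < p.2), x p.1 * x p.2 =
        ∑ p ∈ Finset.univ.filter (fun p : Fin n × Fin n => p.1 < p.2), y p.1 * y p.2 ↔
      ∀ i, y i = x i) := by
  have hprefix := Fin.prefix_sum_nonneg_of_suffix_sum_nonpos (fun i => y i - x i)
    (fun m h₁ h₂ => by simpa only [sum_sub_distrib, sub_nonpos] using htail m h₁ h₂)
    (by rw [sum_sub_distrib, hsum, sub_self])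
  have habel : 0 ≤ ∑ i, x i * (y i - x i) :=
    sum_mul_nonneg_of_antitoneOn univ (fun i _ j _ hij => hxanti i j hij)
      (fun i _ => (hxpos i).le) fun m _ => hprefix m
  have hsq : ∑ i, y i ^ 2 = ∑ i, x i ^ 2 + ∑ i, (y i - x i) ^ 2 + 2 * ∑ i, x i * (y i - x i) := by
    rw [mul_sum, ← sum_add_distrib, ← sum_add_distrib]
    exact sum_congr rfl fun i _ => by ring
  have hgap := sq_sum_eq_sum_sq_add_two_mul_sum_lt x
  rw [hsum, sq_sum_eq_sum_sq_add_two_mul_sum_lt y, hsq] at hgap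
  have hdev : 0 ≤ ∑ i, (y i - x i) ^ 2 := sum_nonneg fun i _ => sq_nonneg _
  refine ⟨by linarith, fun heq i => ?_, fun h => by simp only [h]⟩
  have hzero : ∑ i, (y i - x i) ^ 2 = 0 := by linarith
  rw [sum_eq_zero_iff_of_nonneg fun i _ => sq_nonneg _] at hzero
  exact sub_eq_zero.1 (pow_eq_zero_iff two_ne_zero |>.1 (hzero i (mem_univ i)))

/-- Let `x_1 ≥ … ≥ x_n > 0` and `y_1,…,y_n ≥ 0` be reals such that every proper tail sum
of `x` dominates the corresponding tail sum of `y` (for `2 ≤ m ≤ n`), while the full sums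
are equal. Then `Σ_{i<j} x_i x_j ≥ Σ_{i<j} y_i y_j`, with equality iff `y = x`. -/
theorem stmt12 (n : ℕ) (x y : Fin n → ℝ)
    (hxanti : ∀ i j : Fin n, i ≤ j → x j ≤ x i) (hxpos : ∀ i, 0 < x i)
    (hy : ∀ i, 0 ≤ y i)
    (htail : ∀ m : ℕ, 1 ≤ m → m ≤ n - 1 →
      ∑ i ∈ Finset.univ.filter (fun i : Fin n => m ≤ (i : ℕ)), y i ≤
        ∑ i ∈ Finset.univ.filter (fun i : Fin n => m ≤ (i : ℕ)), x i)
    (hsum : ∑ i, x i = ∑ i, y i) :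
    ∑ p ∈ Finset.univ.filter (fun p : Fin n × Fin n => p.1 < p.2), y p.1 * y p.2 ≤
      ∑ p ∈ Finset.univ.filter (fun p : Fin n × Fin n => p.1 < p.2), x p.1 * x p.2 ∧
    (∑ p ∈ Finset.univ.filter (fun p : Fin n × Fin n => p.1 < p.2), x p.1 * x p.2 =
        ∑ p ∈ Finset.univ.filter (fun p : Fin n × Fin n => p.1 < p.2), y p.1 * y p.2 ↔
      ∀ i, y i = x i) :=
  stmt12_general n x y hxanti hxpos htail hsum
end

section
/- Let x_1 ≥ x_2 ≥ … ≥ x_n > 0 and y_1 ≥ y_2 ≥ … ≥ y_n > 0 be nonincreasing sequences of positive real numbers such that x_1·x_2·…·x_j ≥ y_1·y_2·…·y_j for every 1 ≤ j ≤ n. Then Σ_{i=1}^n x_i ≥ Σ_{i=1}^n y_i and Σ_{1≤i<j≤n} x_i x_j ≥ Σ_{1≤i<j≤n} y_i y_j. -/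
/-!
Put `d i = log x_i - log y_i`; the hypothesis says that every partial sum of `d` is
nonnegative, so by Abel summation `∑ c_i d_i ≥ 0` for every nonnegative nonincreasing weight `c`.
Since `u ≥ v (1 + log u - log v)` for `u, v > 0`, we get `∑ x_i ≥ ∑ y_i + ∑ y_i d_i` and
`∑_{i<j} x_i x_j ≥ ∑_{i<j} y_i y_j + ∑_{i<j} y_i y_j (d_i + d_j)`. The last sum equals
`∑_i y_i (T - y_i) d_i` with `T = ∑ y_i`, and the weights `y_i (T - y_i)` are again
nonincreasing because `y_i + y_j ≤ T`.
-/

open Finset Real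

theorem sum_range_mul_nonneg_of_antitoneOn {c d : ℕ → ℝ} {n : ℕ}
    (hc : AntitoneOn c (Set.Iio n)) (hc₀ : ∀ i < n, 0 ≤ c i)
    (hd : ∀ k ≤ n, 0 ≤ ∑ i ∈ range k, d i) : 0 ≤ ∑ i ∈ range n, c i * d i := by
  induction n generalizing c with
  | zero => simp
  | succ m ih =>
    have hsplit : ∑ i ∈ range (m + 1), c i * d i =
        ∑ i ∈ range m, (c i - c m) * d i + c m * ∑ i ∈ range (m + 1), d i := by
      simp only [sum_range_succ, sub_mul, sum_sub_distrib, ← mul_sum]; ring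
    have hlower : 0 ≤ ∑ i ∈ range m, (c i - c m) * d i := by
      refine ih (fun i hi j hj hij => ?_) (fun i hi => ?_) (fun k hk => hd k (by omega))
      · simpa using hc (by simp at hi ⊢; omega) (by simp at hj ⊢; omega) hij
      · simpa using hc (by simp at hi ⊢; omega) (by simp) hi.le
    rw [hsplit]
    exact add_nonneg hlower (mul_nonneg (hc₀ m (by omega)) (hd (m + 1) le_rfl))

theorem add_mul_log_sub_log_le {u v : ℝ} (hu : 0 < u) (hv : 0 < v) :
    v + v * (log u - log v) ≤ u := by
  have h := log_le_sub_one_of_pos (div_pos hu hv)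
  rw [log_div hu.ne' hv.ne'] at h
  calc v + v * (log u - log v) ≤ v + v * (u / v - 1) := by gcongr
    _ = u := by field_simp; ring

theorem sum_range_sum_range_mul_mul_add (v d : ℕ → ℝ) (n : ℕ) :
    ∑ j ∈ range n, ∑ i ∈ range j, v i * v j * (d i + d j) =
      ∑ i ∈ range n, v i * (∑ k ∈ range n, v k - v i) * d i := by
  induction n with
  | zero => simp
  | succ m ih =>
    rw [sum_range_succ, ih]
    simp only [sum_range_succ, mul_add, add_mul, sub_mul, mul_sub, sum_add_distrib,
      sum_sub_distrib, ← sum_mul]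
    ring

@[to_additive]
theorem Fin.prod_filter_val_lt_eq_prod_range {M : Type*} [CommMonoid M] (f : ℕ → M) {k n : ℕ}
    (hk : k ≤ n) : ∏ i ∈ univ.filter (fun i : Fin n => (i : ℕ) < k), f i = ∏ i ∈ range k, f i := by
  rw [prod_filter, Fin.prod_univ_eq_prod_range (fun i => if i < k then f i else 1), ← prod_filter]
  congr 1
  ext i
  simp only [mem_filter, mem_range]
  omega

theorem Fin.sum_filter_lt_eq_sum_range_sum_range {M : Type*} [AddCommMonoid M] (g : ℕ → ℕ → M)
    (n : ℕ) : ∑ p ∈ univ.filter (fun p : Fin n × Fin n => p.1 < p.2), g p.1 p.2 =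
      ∑ j ∈ range n, ∑ i ∈ range j, g i j := by
  rw [sum_filter, Fintype.sum_prod_type, sum_comm, ← Fin.sum_univ_eq_sum_range]
  refine sum_congr rfl fun j _ => ?_
  rw [← Fin.sum_filter_val_lt_eq_sum_range _ j.isLt.le, sum_filter]
  rfl

section

variable {X Y : ℕ → ℝ} {n : ℕ}

theorem sum_range_log_sub_log_nonneg (hX : ∀ i < n, 0 < X i) (hY : ∀ i < n, 0 < Y i)
    (hprod : ∀ k ≤ n, ∏ i ∈ range k, Y i ≤ ∏ i ∈ range k, X i) {k : ℕ} (hk : k ≤ n) :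
    0 ≤ ∑ i ∈ range k, (log (X i) - log (Y i)) := by
  have hlt : ∀ i ∈ range k, i < n := fun i hi => (mem_range.1 hi).trans_le hk
  rw [sum_sub_distrib, ← log_prod fun i hi => (hX i (hlt i hi)).ne',
    ← log_prod fun i hi => (hY i (hlt i hi)).ne', sub_nonneg]
  exact log_le_log (prod_pos fun i hi => hY i (hlt i hi)) (hprod k hk)

theorem antitoneOn_mul_sum_range_sub (hY₀ : ∀ i < n, 0 ≤ Y i) (hY : AntitoneOn Y (Set.Iio n)) :
    AntitoneOn (fun i => Y i * (∑ k ∈ range n, Y k - Y i)) (Set.Iio n) := by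
  intro i hi j hj hij
  obtain rfl | hlt := hij.eq_or_lt
  · rfl
  have hpair : Y i + Y j ≤ ∑ k ∈ range n, Y k := by
    rw [← sum_pair hlt.ne]
    exact sum_le_sum_of_subset_of_nonneg (by simp [insert_subset_iff, hi.out, hj.out])
      fun k hk _ => hY₀ k (mem_range.1 hk)
  nlinarith [hY hi hj hij]

theorem sum_range_le_of_prod_range_le (hX : ∀ i < n, 0 < X i) (hY : ∀ i < n, 0 < Y i)
    (hYanti : AntitoneOn Y (Set.Iio n))
    (hprod : ∀ k ≤ n, ∏ i ∈ range k, Y i ≤ ∏ i ∈ range k, X i) :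
    ∑ i ∈ range n, Y i ≤ ∑ i ∈ range n, X i := by
  have hd : 0 ≤ ∑ i ∈ range n, Y i * (log (X i) - log (Y i)) :=
    sum_range_mul_nonneg_of_antitoneOn hYanti (fun i hi => (hY i hi).le)
      fun k hk => sum_range_log_sub_log_nonneg hX hY hprod hk
  calc ∑ i ∈ range n, Y i ≤ ∑ i ∈ range n, (Y i + Y i * (log (X i) - log (Y i))) := by
        rw [sum_add_distrib]; linarith
    _ ≤ ∑ i ∈ range n, X i := sum_le_sum fun i hi =>
        add_mul_log_sub_log_le (hX i (mem_range.1 hi)) (hY i (mem_range.1 hi))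

theorem sum_range_sum_range_mul_le_of_prod_range_le (hX : ∀ i < n, 0 < X i)
    (hY : ∀ i < n, 0 < Y i) (hYanti : AntitoneOn Y (Set.Iio n))
    (hprod : ∀ k ≤ n, ∏ i ∈ range k, Y i ≤ ∏ i ∈ range k, X i) :
    ∑ j ∈ range n, ∑ i ∈ range j, Y i * Y j ≤ ∑ j ∈ range n, ∑ i ∈ range j, X i * X j := by
  set d : ℕ → ℝ := fun i => log (X i) - log (Y i)
  have hY₀ : ∀ i < n, 0 ≤ Y i := fun i hi => (hY i hi).le
  have hd : 0 ≤ ∑ j ∈ range n, ∑ i ∈ range j, Y i * Y j * (d i + d j) := by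
    rw [sum_range_sum_range_mul_mul_add]
    refine sum_range_mul_nonneg_of_antitoneOn (antitoneOn_mul_sum_range_sub hY₀ hYanti)
      (fun i hi => mul_nonneg (hY₀ i hi) (sub_nonneg.2 ?_))
      fun k hk => sum_range_log_sub_log_nonneg hX hY hprod hk
    exact single_le_sum (fun k hk => hY₀ k (mem_range.1 hk)) (mem_range.2 hi)
  calc ∑ j ∈ range n, ∑ i ∈ range j, Y i * Y j
      ≤ ∑ j ∈ range n, ∑ i ∈ range j, (Y i * Y j + Y i * Y j * (d i + d j)) := by
        simp only [sum_add_distrib]; linarith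
    _ ≤ ∑ j ∈ range n, ∑ i ∈ range j, X i * X j := by
        refine sum_le_sum fun j hj => sum_le_sum fun i hi => ?_
        have hjn := mem_range.1 hj
        have hin := (mem_range.1 hi).trans hjn
        have key := add_mul_log_sub_log_le (mul_pos (hX i hin) (hX j hjn))
          (mul_pos (hY i hin) (hY j hjn))
        rw [log_mul (hX i hin).ne' (hX j hjn).ne', log_mul (hY i hin).ne' (hY j hjn).ne'] at key
        linarith

end

theorem stmt14_general (n : ℕ) (x y : Fin n → ℝ)
    (hxpos : ∀ i, 0 < x i)
    (hyanti : ∀ i j : Fin n, i ≤ j → y j ≤ y i) (hypos : ∀ i, 0 < y i)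
    (hprod : ∀ j : ℕ, 1 ≤ j → j ≤ n →
      ∏ i ∈ Finset.univ.filter (fun i : Fin n => (i : ℕ) < j), y i ≤
        ∏ i ∈ Finset.univ.filter (fun i : Fin n => (i : ℕ) < j), x i) :
    (∑ i, y i ≤ ∑ i, x i) ∧
    ∑ p ∈ Finset.univ.filter (fun p : Fin n × Fin n => p.1 < p.2), y p.1 * y p.2 ≤
      ∑ p ∈ Finset.univ.filter (fun p : Fin n × Fin n => p.1 < p.2), x p.1 * x p.2 := by
  obtain ⟨X, rfl⟩ : ∃ X : ℕ → ℝ, x = fun i : Fin n => X i :=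
    ⟨fun i => if h : i < n then x ⟨i, h⟩ else 0, by simp⟩
  obtain ⟨Y, rfl⟩ : ∃ Y : ℕ → ℝ, y = fun i : Fin n => Y i :=
    ⟨fun i => if h : i < n then y ⟨i, h⟩ else 0, by simp⟩
  have hX : ∀ i < n, 0 < X i := fun i hi => hxpos ⟨i, hi⟩
  have hY : ∀ i < n, 0 < Y i := fun i hi => hypos ⟨i, hi⟩
  have hYanti : AntitoneOn Y (Set.Iio n) := fun i hi j hj hij => hyanti ⟨i, hi⟩ ⟨j, hj⟩ hij
  have hprod' : ∀ k ≤ n, ∏ i ∈ range k, Y i ≤ ∏ i ∈ range k, X i := by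
    intro k hk
    obtain rfl | hk₀ := k.eq_zero_or_pos
    · simp
    simpa only [Fin.prod_filter_val_lt_eq_prod_range _ hk] using hprod k hk₀ hk
  rw [Fin.sum_univ_eq_sum_range, Fin.sum_univ_eq_sum_range,
    Fin.sum_filter_lt_eq_sum_range_sum_range fun i j => Y i * Y j,
    Fin.sum_filter_lt_eq_sum_range_sum_range fun i j => X i * X j]
  exact ⟨sum_range_le_of_prod_range_le hX hY hYanti hprod',
    sum_range_sum_range_mul_le_of_prod_range_le hX hY hYanti hprod'⟩

/-- Let `x_1 ≥ … ≥ x_n > 0` and `y_1 ≥ … ≥ y_n > 0` be nonincreasing sequences of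
positive reals with `x_1 ⋯ x_j ≥ y_1 ⋯ y_j` for every `1 ≤ j ≤ n`. Then
`Σ x_i ≥ Σ y_i` and `Σ_{i<j} x_i x_j ≥ Σ_{i<j} y_i y_j`. -/
theorem stmt14 (n : ℕ) (x y : Fin n → ℝ)
    (hxanti : ∀ i j : Fin n, i ≤ j → x j ≤ x i) (hxpos : ∀ i, 0 < x i)
    (hyanti : ∀ i j : Fin n, i ≤ j → y j ≤ y i) (hypos : ∀ i, 0 < y i)
    (hprod : ∀ j : ℕ, 1 ≤ j → j ≤ n →
      ∏ i ∈ Finset.univ.filter (fun i : Fin n => (i : ℕ) < j), y i ≤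
        ∏ i ∈ Finset.univ.filter (fun i : Fin n => (i : ℕ) < j), x i) :
    (∑ i, y i ≤ ∑ i, x i) ∧
    ∑ p ∈ Finset.univ.filter (fun p : Fin n × Fin n => p.1 < p.2), y p.1 * y p.2 ≤
      ∑ p ∈ Finset.univ.filter (fun p : Fin n × Fin n => p.1 < p.2), x p.1 * x p.2 :=
  stmt14_general n x y hxpos hyanti hypos hprod
end

section
/- Let n ≥ 3 and let x_1 ≤ x_2 ≤ … ≤ x_{n−1} be positive integers with Σ_{1≤i<j≤n−1} 1/(x_i x_j) = 1 − 1/L, where L = lcm over all pairs 1 ≤ i < j ≤ n−1 of the products x_i x_j. Then x_n := L · Σ_{i=1}^{n−1} 1/x_i is a positive integer and Σ_{1≤i<j≤n} 1/(x_i x_j) = 1. -/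
/-- Let `n ≥ 3` and `x_1 ≤ … ≤ x_{n−1}` be positive integers with
`Σ_{1≤i<j≤n−1} 1/(x_i x_j) = 1 − 1/L`, where `L` is the lcm of all pairwise products
`x_i x_j`. Then `x_n := L · Σ_{i=1}^{n−1} 1/x_i` is a positive integer and, extending
the tuple by `x_n`, one has `Σ_{1≤i<j≤n} 1/(x_i x_j) = 1`. -/
theorem stmt15 (n : ℕ) (hn : 3 ≤ n) (x : ℕ → ℕ)
    (hpos : ∀ i ∈ Finset.Icc 1 (n - 1), 0 < x i)
    (hmono : ∀ i ∈ Finset.Icc 1 (n - 1), ∀ j ∈ Finset.Icc 1 (n - 1), i ≤ j → x i ≤ x j)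
    (L : ℕ)
    (hL : L = ((Finset.Icc 1 (n - 1) ×ˢ Finset.Icc 1 (n - 1)).filter
        (fun p => p.1 < p.2)).lcm (fun p => x p.1 * x p.2))
    (h : ∑ p ∈ (Finset.Icc 1 (n - 1) ×ˢ Finset.Icc 1 (n - 1)).filter
        (fun p => p.1 < p.2), (1 : ℚ) / (x p.1 * x p.2) = 1 - 1 / L) :
    (∃ m : ℕ, 0 < m ∧
      (m : ℚ) = L * ∑ i ∈ Finset.Icc 1 (n - 1), (1 : ℚ) / x i) ∧
    (∑ p ∈ (Finset.Icc 1 (n - 1) ×ˢ Finset.Icc 1 (n - 1)).filter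
        (fun p => p.1 < p.2), (1 : ℚ) / (x p.1 * x p.2)) +
      ∑ i ∈ Finset.Icc 1 (n - 1),
        (1 : ℚ) / (x i * (L * ∑ j ∈ Finset.Icc 1 (n - 1), (1 : ℚ) / x j)) = 1 := by
  have hn1 : 2 ≤ n - 1 := by omega
  -- each x i divides L
  have hdvd : ∀ i ∈ Finset.Icc 1 (n - 1), x i ∣ L := by
    intro i hi
    rw [Finset.mem_Icc] at hi
    rw [hL]
    rcases Nat.lt_or_ge 1 i with h1 | h1
    · have hmem : ((1, i) : ℕ × ℕ) ∈ (Finset.Icc 1 (n - 1) ×ˢ Finset.Icc 1 (n - 1)).filter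
        (fun p => p.1 < p.2) := by
        simp only [Finset.mem_filter, Finset.mem_product, Finset.mem_Icc]
        omega
      exact dvd_trans (Dvd.intro_left _ rfl) (Finset.dvd_lcm hmem)
    · have hi1 : i = 1 := by omega
      have hmem : ((1, 2) : ℕ × ℕ) ∈ (Finset.Icc 1 (n - 1) ×ˢ Finset.Icc 1 (n - 1)).filter
        (fun p => p.1 < p.2) := by
        simp only [Finset.mem_filter, Finset.mem_product, Finset.mem_Icc]
        omega
      exact dvd_trans (Dvd.intro _ rfl) (by simpa [hi1] using Finset.dvd_lcm hmem)
  have hLpos : 0 < L := by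
    rw [hL]
    rw [pos_iff_ne_zero, Ne, Finset.lcm_eq_zero_iff]
    intro hmem
    simp only [Set.mem_image, Finset.mem_coe, Finset.mem_filter, Finset.mem_product,
      Finset.mem_Icc] at hmem
    obtain ⟨p, ⟨⟨hp1, hp2⟩, _⟩, hp0⟩ := hmem
    have := hpos p.1 (Finset.mem_Icc.mpr hp1)
    have := hpos p.2 (Finset.mem_Icc.mpr hp2)
    have : 0 < x p.1 * x p.2 := by positivity
    omega
  have hne : (Finset.Icc 1 (n - 1)).Nonempty := ⟨1, Finset.mem_Icc.mpr (by omega)⟩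
  have hSpos : 0 < ∑ i ∈ Finset.Icc 1 (n - 1), (1 : ℚ) / x i := by
    apply Finset.sum_pos _ hne
    intro i hi
    have := hpos i hi
    positivity
  set S := ∑ i ∈ Finset.Icc 1 (n - 1), (1 : ℚ) / x i with hS
  have hLQ : (0:ℚ) < L := by exact_mod_cast hLpos
  constructor
  · refine ⟨∑ i ∈ Finset.Icc 1 (n - 1), L / x i, ?_, ?_⟩
    · have h1 : (1:ℕ) ∈ Finset.Icc 1 (n - 1) := Finset.mem_Icc.mpr (by omega)
      have hx1 := hpos 1 h1
      have hd := hdvd 1 h1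
      have : 0 < L / x 1 := Nat.div_pos (Nat.le_of_dvd hLpos hd) hx1
      calc 0 < L / x 1 := this
        _ ≤ ∑ i ∈ Finset.Icc 1 (n - 1), L / x i :=
          Finset.single_le_sum (f := fun i => L / x i) (fun i _ => Nat.zero_le _) h1
    · rw [Nat.cast_sum, hS, Finset.mul_sum]
      apply Finset.sum_congr rfl
      intro i hi
      rw [Nat.cast_div (hdvd i hi) (by exact_mod_cast (hpos i hi).ne')]
      ring
  · rw [h]
    have key : ∑ i ∈ Finset.Icc 1 (n - 1), (1 : ℚ) / (x i * (L * S)) = 1 / L := by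
      have : ∀ i ∈ Finset.Icc 1 (n - 1), (1 : ℚ) / (x i * (L * S)) =
          (1 / x i) * (1 / (L * S)) := by
        intro i hi
        rw [div_mul_div_comm, one_mul]
      rw [Finset.sum_congr rfl this, ← Finset.sum_mul]
      rw [← hS]
      field_simp
    rw [key]
    ring
end

section
/- Let n ≥ 3 and let x_1 ≤ x_2 ≤ … ≤ x_{n−1} be positive integers with Σ_{1≤i<j≤n−1} 1/(x_i x_j) = 1 − 1/L, where L = lcm over all pairs 1 ≤ i < j ≤ n−1 of the products x_i x_j. Set x_n = L · Σ_{i=1}^{n−1} 1/x_i and define the n-tuple (x_1*, …, x_n*) = (x_1, …, x_{n−1}, x_n + 1). Then Σ_{1≤i<j≤n} 1/(x_i* x_j*) = 1 − 1/L*, where L* = lcm over all pairs 1 ≤ i < j ≤ n of the products x_i* x_j*; moreover L* = (x_n + 1)·L. -/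
/-!
Splitting off the pairs that contain the new index `n`, the new sum is the old one plus
`(∑ 1 / x_i) / (x_n + 1) = x_n / (L (x_n + 1))`, which turns `1 - 1/L` into
`1 - 1/((x_n + 1) L)`. The new pairs contribute `M (x_n + 1)` to the lcm, where `M = lcm_i x_i`
divides `L`; since `L / M` divides every `L / x_i`, it divides `x_n = ∑ L / x_i` and so is
coprime to `x_n + 1`, whence `lcm (L, M (x_n + 1)) = (x_n + 1) L`.
-/

open Finset

def ltPairs {α : Type*} [LinearOrder α] (s : Finset α) : Finset (α × α) :=
  (s ×ˢ s).filter fun p => p.1 < p.2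

section ltPairs

variable {α : Type*} [LinearOrder α] {s : Finset α} {a : α}

lemma mem_ltPairs {p : α × α} : p ∈ ltPairs s ↔ p.1 ∈ s ∧ p.2 ∈ s ∧ p.1 < p.2 := by
  simp [ltPairs, and_assoc]

lemma ltPairs_insert_of_forall_lt (ha : ∀ i ∈ s, i < a) :
    ltPairs (insert a s) = ltPairs s ∪ s.image (·, a) := by
  ext ⟨i, j⟩
  simp only [mem_ltPairs, mem_insert, mem_union, mem_image, Prod.mk.injEq]
  constructor
  · rintro ⟨hi | hi, hj | hj, hij⟩
    · exact absurd hij (by simp [hi, hj])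
    · exact absurd (hij.trans (ha j hj)) (by simp [hi])
    · exact Or.inr ⟨i, hi, rfl, hj.symm⟩
    · exact Or.inl ⟨hi, hj, hij⟩
  · rintro (⟨hi, hj, hij⟩ | ⟨i, hi, rfl, rfl⟩)
    · exact ⟨Or.inr hi, Or.inr hj, hij⟩
    · exact ⟨Or.inr hi, Or.inl rfl, ha i hi⟩

lemma disjoint_ltPairs_image_of_forall_lt (ha : ∀ i ∈ s, i < a) :
    Disjoint (ltPairs s) (s.image (·, a)) := by
  simp only [disjoint_left, mem_ltPairs, mem_image, not_exists, not_and]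
  rintro ⟨i, j⟩ ⟨-, hj, -⟩ k - hk
  exact (ha j hj).ne (Prod.mk.inj hk).2.symm

lemma sum_ltPairs_insert {M : Type*} [AddCommMonoid M] (ha : ∀ i ∈ s, i < a)
    (f : α × α → M) :
    ∑ p ∈ ltPairs (insert a s), f p = ∑ p ∈ ltPairs s, f p + ∑ i ∈ s, f (i, a) := by
  rw [ltPairs_insert_of_forall_lt ha, sum_union (disjoint_ltPairs_image_of_forall_lt ha),
    sum_image fun _ _ _ _ h => (Prod.mk.inj h).1]

lemma sum_ltPairs_insert_update {β M : Type*} [AddCommMonoid M] (ha : ∀ i ∈ s, i < a)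
    (x : α → β) (c : β) (g : β → β → M) :
    ∑ p ∈ ltPairs (insert a s), g (Function.update x a c p.1) (Function.update x a c p.2) =
      ∑ p ∈ ltPairs s, g (x p.1) (x p.2) + ∑ i ∈ s, g (x i) c := by
  rw [sum_ltPairs_insert ha]
  congr 1
  · refine sum_congr rfl fun p hp => ?_
    obtain ⟨h1, h2, -⟩ := mem_ltPairs.1 hp
    rw [Function.update_of_ne (ha _ h1).ne, Function.update_of_ne (ha _ h2).ne]
  · refine sum_congr rfl fun i hi => ?_
    rw [Function.update_of_ne (ha i hi).ne, Function.update_self]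

section GCDMonoid

variable {β : Type*} [CommMonoidWithZero β] [NormalizedGCDMonoid β]

lemma lcm_ltPairs_insert (ha : ∀ i ∈ s, i < a) (f : α × α → β) :
    (ltPairs (insert a s)).lcm f = lcm ((ltPairs s).lcm f) (s.lcm fun i => f (i, a)) := by
  rw [ltPairs_insert_of_forall_lt ha, lcm_union, lcm_image]
  rfl

lemma lcm_ltPairs_insert_update (ha : ∀ i ∈ s, i < a) (x : α → β) (c : β) :
    (ltPairs (insert a s)).lcm
        (fun p => Function.update x a c p.1 * Function.update x a c p.2) =
      lcm ((ltPairs s).lcm fun p => x p.1 * x p.2) (s.lcm fun i => x i * c) := by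
  rw [lcm_ltPairs_insert ha]
  congr 1
  · refine lcm_congr rfl fun p hp => ?_
    obtain ⟨h1, h2, -⟩ := mem_ltPairs.1 hp
    rw [Function.update_of_ne (ha _ h1).ne, Function.update_of_ne (ha _ h2).ne]
  · refine lcm_congr rfl fun i hi => ?_
    rw [Function.update_of_ne (ha i hi).ne, Function.update_self]

lemma dvd_lcm_ltPairs (x : α → β) (hs : 1 < #s) {i : α} (hi : i ∈ s) :
    x i ∣ (ltPairs s).lcm fun p => x p.1 * x p.2 := by
  obtain ⟨j, hj, hji⟩ := exists_mem_ne hs i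
  rcases hji.lt_or_gt with hlt | hlt
  · exact (dvd_mul_left _ (x j)).trans
      (dvd_lcm (s := ltPairs s) (b := (j, i)) (mem_ltPairs.2 ⟨hj, hi, hlt⟩))
  · exact (dvd_mul_right _ (x j)).trans
      (dvd_lcm (s := ltPairs s) (b := (i, j)) (mem_ltPairs.2 ⟨hi, hj, hlt⟩))

end GCDMonoid

end ltPairs

lemma Nat.lcm_mul_succ_of_div_dvd {L m d : ℕ} (hm : m ∣ L) (hd : L / m ∣ d) :
    Nat.lcm L (m * (d + 1)) = (d + 1) * L := by
  have hcop : Nat.Coprime (L / m) (d + 1) :=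
    Nat.coprime_of_dvd' fun k _ hkL hkd => by
      simpa using (Nat.dvd_add_right (hkL.trans hd)).1 hkd
  calc Nat.lcm L (m * (d + 1))
      = Nat.lcm (L / m * m) ((d + 1) * m) := by rw [Nat.div_mul_cancel hm, mul_comm]
    _ = (d + 1) * (L / m * m) := by rw [Nat.lcm_mul_right, hcop.lcm_eq_mul]; ring
    _ = (d + 1) * L := by rw [Nat.div_mul_cancel hm]

namespace Finset

variable {ι : Type*} {s : Finset ι}

lemma lcm_mul_const_nat (hs : s.Nonempty) (f : ι → ℕ) (c : ℕ) :
    s.lcm (fun i => f i * c) = s.lcm f * c := by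
  induction hs using Nonempty.cons_induction with
  | singleton a => simp
  | cons a s ha hs ih =>
    classical
    rw [cons_eq_insert, lcm_insert, lcm_insert, ih, lcm_eq_nat_lcm, lcm_eq_nat_lcm,
      Nat.lcm_mul_right]

lemma nat_lcm_lcm_mul_sum_div_add_one (hs : s.Nonempty) {x : ι → ℕ} {L : ℕ}
    (hdvd : ∀ i ∈ s, x i ∣ L) :
    Nat.lcm L (s.lcm fun i => x i * (∑ j ∈ s, L / x j + 1)) =
      (∑ j ∈ s, L / x j + 1) * L := by
  have hM : s.lcm x ∣ L := Finset.lcm_dvd hdvd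
  rw [lcm_mul_const_nat hs]
  exact Nat.lcm_mul_succ_of_div_dvd hM <|
    dvd_sum fun i hi => Nat.div_dvd_div_left hM (dvd_lcm hi)

lemma cast_sum_div_of_dvd {K : Type*} [DivisionSemiring K] [CharZero K] {x : ι → ℕ} {L : ℕ}
    (hdvd : ∀ i ∈ s, x i ∣ L) :
    ((∑ i ∈ s, L / x i : ℕ) : K) = L * ∑ i ∈ s, 1 / (x i : K) := by
  rw [Nat.cast_sum, mul_sum]
  exact sum_congr rfl fun i hi => by rw [Nat.cast_div_charZero (hdvd i hi), mul_one_div]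

end Finset

lemma one_sub_one_div_add_div_mul_add_one {K : Type*} [Field K] {L S : K} (hL : L ≠ 0)
    (hLS : L * S + 1 ≠ 0) :
    1 - 1 / L + S / (L * S + 1) = 1 - 1 / ((L * S + 1) * L) := by
  field_simp
  ring

theorem stmt16_general (n : ℕ) (hn : 3 ≤ n) (x : ℕ → ℕ)
    (hpos : ∀ i ∈ Finset.Icc 1 (n - 1), 0 < x i)
    (L : ℕ)
    (hL : L = ((Finset.Icc 1 (n - 1) ×ˢ Finset.Icc 1 (n - 1)).filter
        (fun p => p.1 < p.2)).lcm (fun p => x p.1 * x p.2))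
    (h : ∑ p ∈ (Finset.Icc 1 (n - 1) ×ˢ Finset.Icc 1 (n - 1)).filter
        (fun p => p.1 < p.2), (1 : ℚ) / (x p.1 * x p.2) = 1 - 1 / L)
    (xn : ℕ) (hxn : (xn : ℚ) = L * ∑ i ∈ Finset.Icc 1 (n - 1), (1 : ℚ) / x i)
    (xstar : ℕ → ℕ) (hxstar : xstar = Function.update x n (xn + 1))
    (Lstar : ℕ)
    (hLstar : Lstar = ((Finset.Icc 1 n ×ˢ Finset.Icc 1 n).filter
        (fun p => p.1 < p.2)).lcm (fun p => xstar p.1 * xstar p.2)) :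
    (∑ p ∈ (Finset.Icc 1 n ×ˢ Finset.Icc 1 n).filter (fun p => p.1 < p.2),
        (1 : ℚ) / (xstar p.1 * xstar p.2) = 1 - 1 / Lstar) ∧
    Lstar = (xn + 1) * L := by
  set A := Icc 1 (n - 1)
  change L = (ltPairs A).lcm _ at hL
  change ∑ p ∈ ltPairs A, _ = _ at h
  change Lstar = (ltPairs (Icc 1 n)).lcm _ at hLstar
  change (∑ p ∈ ltPairs (Icc 1 n), _ = _) ∧ _
  subst hxstar
  have hIcc : Icc 1 n = insert n A := by ext i; simp [A]; omega
  have hA : ∀ i ∈ A, i < n := fun i hi => by simp [A] at hi; omega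
  have hdvd : ∀ i ∈ A, x i ∣ L := fun i hi =>
    hL ▸ dvd_lcm_ltPairs x (by simp [A]; omega) hi
  have hxn_sum : xn = ∑ i ∈ A, L / x i := by
    exact_mod_cast hxn.trans (cast_sum_div_of_dvd hdvd).symm
  have hL0 : (L : ℚ) ≠ 0 := by
    rw [hL, Nat.cast_ne_zero, Finset.lcm_ne_zero_iff]
    intro p hp
    obtain ⟨h1, h2, -⟩ := mem_ltPairs.1 hp
    exact mul_ne_zero (hpos _ h1).ne' (hpos _ h2).ne'
  have hLstar_eq : Lstar = (xn + 1) * L := by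
    rw [hLstar, hIcc, lcm_ltPairs_insert_update hA, ← hL, lcm_eq_nat_lcm, hxn_sum,
      nat_lcm_lcm_mul_sum_div_add_one ⟨1, by simp [A]; omega⟩ hdvd]
  refine ⟨?_, hLstar_eq⟩
  rw [hIcc]
  refine (sum_ltPairs_insert_update hA x (xn + 1) fun u v : ℕ => (1 : ℚ) / (u * v)).trans ?_
  have hS : ∑ i ∈ A, (1 : ℚ) / (x i * (xn + 1 : ℕ)) =
      (∑ i ∈ A, (1 : ℚ) / x i) / (xn + 1) := by
    simp_rw [← div_div, sum_div, Nat.cast_add_one]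
  rw [h, hS, hLstar_eq, Nat.cast_mul, Nat.cast_add_one, hxn]
  exact one_sub_one_div_add_div_mul_add_one hL0 (hxn ▸ Nat.cast_add_one_ne_zero xn)

/-- Let `n ≥ 3` and `x_1 ≤ … ≤ x_{n−1}` be positive integers with
`Σ_{1≤i<j≤n−1} 1/(x_i x_j) = 1 − 1/L`, where `L` is the lcm of all pairwise products
`x_i x_j` (`1 ≤ i < j ≤ n−1`). Let `x_n = L · Σ_{i=1}^{n−1} 1/x_i` (a positive integer)
and form the tuple `x* = (x_1,…,x_{n−1}, x_n + 1)`. Then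
`Σ_{1≤i<j≤n} 1/(x*_i x*_j) = 1 − 1/L*`, where `L*` is the lcm of the pairwise products
`x*_i x*_j` (`1 ≤ i < j ≤ n`), and moreover `L* = (x_n + 1)·L`. -/
theorem stmt16 (n : ℕ) (hn : 3 ≤ n) (x : ℕ → ℕ)
    (hpos : ∀ i ∈ Finset.Icc 1 (n - 1), 0 < x i)
    (hmono : ∀ i ∈ Finset.Icc 1 (n - 1), ∀ j ∈ Finset.Icc 1 (n - 1), i ≤ j → x i ≤ x j)
    (L : ℕ)
    (hL : L = ((Finset.Icc 1 (n - 1) ×ˢ Finset.Icc 1 (n - 1)).filter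
        (fun p => p.1 < p.2)).lcm (fun p => x p.1 * x p.2))
    (h : ∑ p ∈ (Finset.Icc 1 (n - 1) ×ˢ Finset.Icc 1 (n - 1)).filter
        (fun p => p.1 < p.2), (1 : ℚ) / (x p.1 * x p.2) = 1 - 1 / L)
    (xn : ℕ) (hxn : (xn : ℚ) = L * ∑ i ∈ Finset.Icc 1 (n - 1), (1 : ℚ) / x i)
    (xstar : ℕ → ℕ) (hxstar : xstar = Function.update x n (xn + 1))
    (Lstar : ℕ)
    (hLstar : Lstar = ((Finset.Icc 1 n ×ˢ Finset.Icc 1 n).filter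
        (fun p => p.1 < p.2)).lcm (fun p => xstar p.1 * xstar p.2)) :
    (∑ p ∈ (Finset.Icc 1 n ×ˢ Finset.Icc 1 n).filter (fun p => p.1 < p.2),
        (1 : ℚ) / (xstar p.1 * xstar p.2) = 1 - 1 / Lstar) ∧
    Lstar = (xn + 1) * L :=
  stmt16_general n hn x hpos L hL h xn hxn xstar hxstar Lstar hLstar
end

section
/- For every n ≥ 2, Σ_{1≤i<j≤n−1} 1/(v_i v_j) + (1/(v_n − 1))·Σ_{i=1}^{n−1} 1/v_i = 1; equivalently, σ_{n−2}(v_1, v_2, …, v_{n−1}, v_n − 1) = σ_n(v_1, v_2, …, v_{n−1}, v_n − 1). -/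
/-- The `k`-th elementary symmetric polynomial of the rationals `x 0, …, x (n-1)`. -/
def esymmQ (n k : ℕ) (x : Fin n → ℚ) : ℚ :=
  ∑ s ∈ Finset.univ.powersetCard k, ∏ i ∈ s, x i

open Finset

namespace Finset

variable {α : Type*} [LinearOrder α]

theorem sum_powersetCard_two_eq_sum_filter_lt {R : Type*} [CommSemiring R] (s : Finset α)
    (f : α → R) :
    ∑ t ∈ s.powersetCard 2, ∏ i ∈ t, f i =
      ∑ p ∈ (s ×ˢ s).filter (fun p => p.1 < p.2), f p.1 * f p.2 := by
  symm
  refine sum_bij (fun p _ => {p.1, p.2}) ?_ ?_ ?_ ?_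
  · rintro ⟨a, b⟩ hp
    simp only [mem_filter, mem_product] at hp
    exact mem_powersetCard.2
      ⟨insert_subset hp.1.1 (singleton_subset_iff.2 hp.1.2), card_pair hp.2.ne⟩
  · rintro ⟨a, b⟩ hab ⟨c, d⟩ hcd h
    simp only [mem_filter] at hab hcd
    have := congrArg ((↑) : Finset α → Set α) h
    push_cast at this
    rcases Set.pair_eq_pair_iff.1 this with ⟨rfl, rfl⟩ | ⟨rfl, rfl⟩
    · rfl
    · exact absurd (hab.2.trans hcd.2) (lt_irrefl _)
  · intro t ht
    obtain ⟨hts, hcard⟩ := mem_powersetCard.1 ht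
    obtain ⟨a, b, hab, rfl⟩ := card_eq_two.1 hcard
    have ha : a ∈ s := hts (mem_insert_self a _)
    have hb : b ∈ s := hts (mem_insert_of_mem (mem_singleton_self b))
    rcases hab.lt_or_gt with h | h
    · exact ⟨(a, b), mem_filter.2 ⟨mem_product.2 ⟨ha, hb⟩, h⟩, rfl⟩
    · exact ⟨(b, a), mem_filter.2 ⟨mem_product.2 ⟨hb, ha⟩, h⟩, pair_comm b a⟩
  · rintro ⟨a, b⟩ hp
    exact (prod_pair (mem_filter.1 hp).2.ne).symm

theorem sum_filter_lt_insert_of_forall_lt {M : Type*} [AddCommMonoid M] {s : Finset α} {a : α}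
    (ha : ∀ b ∈ s, b < a) (F : α → α → M) :
    ∑ p ∈ (insert a s ×ˢ insert a s).filter (fun p => p.1 < p.2), F p.1 p.2 =
      ∑ p ∈ (s ×ˢ s).filter (fun p => p.1 < p.2), F p.1 p.2 + ∑ b ∈ s, F b a := by
  have has : a ∉ s := fun h => lt_irrefl a (ha a h)
  simp only [sum_filter, sum_product, sum_insert has, lt_irrefl, if_false, zero_add]
  rw [sum_eq_zero fun b hb => if_neg (ha b hb).not_gt, zero_add, sum_add_distrib, add_comm]
  exact congrArg _ (sum_congr rfl fun b hb => if_pos (ha b hb))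

theorem sum_powersetCard_prod_eq_prod_mul_sum_inv {K : Type*} [Field K] {s : Finset α}
    {j k : ℕ} (hjk : j + k = #s) {f : α → K} (hf : ∀ i ∈ s, f i ≠ 0) :
    ∑ t ∈ s.powersetCard j, ∏ i ∈ t, f i =
      (∏ i ∈ s, f i) * ∑ t ∈ s.powersetCard k, ∏ i ∈ t, (f i)⁻¹ := by
  classical
  rw [Finset.mul_sum]
  refine sum_nbij' (s \ ·) (s \ ·) ?_ ?_ ?_ ?_ ?_ <;> intro t ht <;>
    obtain ⟨hts, hcard⟩ := mem_powersetCard.1 ht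
  · exact mem_powersetCard.2 ⟨sdiff_subset, by rw [card_sdiff_of_subset hts]; omega⟩
  · exact mem_powersetCard.2 ⟨sdiff_subset, by rw [card_sdiff_of_subset hts]; omega⟩
  · exact sdiff_sdiff_eq_self hts
  · exact sdiff_sdiff_eq_self hts
  · have hne : ∏ i ∈ s \ t, f i ≠ 0 := prod_ne_zero_iff.2 fun i hi => hf i (sdiff_subset hi)
    rw [prod_inv_distrib, ← prod_sdiff hts]
    field_simp

end Finset

theorem esymmQ_eq_sum_powersetCard_Icc (n k : ℕ) (g : ℕ → ℚ) :
    esymmQ n k (fun i => g (i + 1)) = ∑ t ∈ (Icc 1 n).powersetCard k, ∏ i ∈ t, g i := by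
  have hmap :
      (univ : Finset (Fin n)).map (Fin.valEmbedding.trans (addRightEmbedding 1)) = Icc 1 n := by
    ext j
    simp only [mem_map, mem_univ, true_and, Function.Embedding.trans_apply,
      Fin.valEmbedding_apply, addRightEmbedding_apply, mem_Icc]
    exact ⟨by rintro ⟨i, rfl⟩; omega, fun h => ⟨⟨j - 1, by omega⟩, by simp only; omega⟩⟩
  rw [esymmQ, ← hmap, powersetCard_map, sum_map]
  refine sum_congr rfl fun t _ => ?_
  simp only [RelEmbedding.coe_toEmbedding, mapEmbedding_apply, prod_map]
  rfl

namespace vSpec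

variable {v : ℕ → ℚ}

theorem succ_eq_of_one_sub_sum_eq (hv : vSpec v) {n : ℕ}
    (h : 1 - ∑ p ∈ (Icc 1 n ×ˢ Icc 1 n).filter (fun p => p.1 < p.2), 1 / (v p.1 * v p.2) =
      (∏ i ∈ Icc 1 n, v i)⁻¹) :
    v (n + 1) = 1 + (∑ i ∈ Icc 1 n, 1 / v i) * ∏ i ∈ Icc 1 n, v i := by
  obtain ⟨h1, h2, hrec⟩ := hv
  -- the recursion starts at `n = 2`, but `v 1 = 1` and `v 2 = 2` obey the same formula
  match n with
  | 0 => simp [h1]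
  | 1 => simp [h1, h2]; norm_num
  | n + 2 => rw [hrec (n + 2) (by omega), h, div_inv_eq_mul]

theorem pos_and_one_sub_sum_eq (hv : vSpec v) (n : ℕ) :
    (∀ i ∈ Icc 1 n, 0 < v i) ∧
      1 - ∑ p ∈ (Icc 1 n ×ˢ Icc 1 n).filter (fun p => p.1 < p.2), 1 / (v p.1 * v p.2) =
        (∏ i ∈ Icc 1 n, v i)⁻¹ := by
  induction n with
  | zero => simp
  | succ n ih =>
    obtain ⟨hpos, hinv⟩ := ih
    have hsucc := hv.succ_eq_of_one_sub_sum_eq hinv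
    have hP : 0 < ∏ i ∈ Icc 1 n, v i := prod_pos hpos
    have he : 0 ≤ ∑ i ∈ Icc 1 n, 1 / v i :=
      sum_nonneg fun i hi => (one_div_pos.2 (hpos i hi)).le
    have hvpos : 0 < v (n + 1) := by rw [hsucc]; positivity
    rw [← insert_Icc_right_eq_Icc_add_one (by omega)]
    refine ⟨fun i hi => ?_, ?_⟩
    · rcases mem_insert.1 hi with rfl | hi
      exacts [hvpos, hpos i hi]
    · rw [sum_filter_lt_insert_of_forall_lt (a := n + 1) (fun i hi => by simp at hi; omega)
        (fun a b => 1 / (v a * v b)), prod_insert (by simp)]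
      have hcross : ∑ i ∈ Icc 1 n, 1 / (v i * v (n + 1)) =
          (∑ i ∈ Icc 1 n, 1 / v i) / v (n + 1) := by
        rw [sum_div]
        exact sum_congr rfl fun i _ => (div_div 1 (v i) (v (n + 1))).symm
      rw [hcross, ← sub_sub, hinv]
      field_simp
      linear_combination hsucc

theorem pos (hv : vSpec v) {i : ℕ} (hi : 1 ≤ i) : 0 < v i :=
  (hv.pos_and_one_sub_sum_eq i).1 i (mem_Icc.2 ⟨hi, le_rfl⟩)

theorem succ_sub_one_eq (hv : vSpec v) (n : ℕ) :
    v (n + 1) - 1 = (∑ i ∈ Icc 1 n, 1 / v i) * ∏ i ∈ Icc 1 n, v i := by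
  rw [hv.succ_eq_of_one_sub_sum_eq (hv.pos_and_one_sub_sum_eq n).2, add_sub_cancel_left]

theorem succ_sub_one_pos (hv : vSpec v) {n : ℕ} (hn : 1 ≤ n) : 0 < v (n + 1) - 1 := by
  have hpos := (hv.pos_and_one_sub_sum_eq n).1
  rw [hv.succ_sub_one_eq]
  exact mul_pos (sum_pos (fun i hi => one_div_pos.2 (hpos i hi)) (nonempty_Icc.2 hn))
    (prod_pos hpos)

theorem sum_pairs_add_one_div_mul_sum_eq_one (hv : vSpec v) {n : ℕ} (hn : 1 ≤ n) :
    ∑ p ∈ (Icc 1 n ×ˢ Icc 1 n).filter (fun p => p.1 < p.2), 1 / (v p.1 * v p.2) +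
      1 / (v (n + 1) - 1) * ∑ i ∈ Icc 1 n, 1 / v i = 1 := by
  have hne := (hv.succ_sub_one_pos hn).ne'
  have hinv := (hv.pos_and_one_sub_sum_eq n).2
  rw [hv.succ_sub_one_eq] at hne ⊢
  have he : ∑ i ∈ Icc 1 n, 1 / v i ≠ 0 := left_ne_zero_of_mul hne
  rw [one_div_mul_eq_div, div_mul_cancel_left₀ he, ← hinv]
  ring

theorem sum_powersetCard_two_inv_eq_one (hv : vSpec v) {n : ℕ} (hn : 1 ≤ n) {w : ℕ → ℚ}
    (hw : ∀ i ≤ n, w i = v i) (hwn : w (n + 1) = v (n + 1) - 1) :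
    ∑ t ∈ (Icc 1 (n + 1)).powersetCard 2, ∏ i ∈ t, (w i)⁻¹ = 1 := by
  rw [sum_powersetCard_two_eq_sum_filter_lt, ← insert_Icc_right_eq_Icc_add_one (by omega),
    sum_filter_lt_insert_of_forall_lt (a := n + 1) (fun i hi => by simp at hi; omega)
      (fun a b => (w a)⁻¹ * (w b)⁻¹),
    ← hv.sum_pairs_add_one_div_mul_sum_eq_one hn, Finset.mul_sum]
  congr 1
  · refine sum_congr rfl fun p hp => ?_
    simp only [mem_filter, mem_product, mem_Icc] at hp
    rw [hw p.1 hp.1.1.2, hw p.2 hp.1.2.2, one_div, mul_inv]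
  · refine sum_congr rfl fun i hi => ?_
    rw [hw i (mem_Icc.1 hi).2, hwn, one_div, one_div, mul_comm]

end vSpec

/-- For every `n ≥ 2`,
`Σ_{1≤i<j≤n−1} 1/(v_i v_j) + (1/(v_n − 1))·Σ_{i=1}^{n−1} 1/v_i = 1`; equivalently,
`σ_{n−2}(v_1,…,v_{n−1},v_n − 1) = σ_n(v_1,…,v_{n−1},v_n − 1)`. -/
theorem stmt19 (v : ℕ → ℚ) (hv : vSpec v) (n : ℕ) (hn : 2 ≤ n) :
    (∑ p ∈ (Finset.Icc 1 (n - 1) ×ˢ Finset.Icc 1 (n - 1)).filter (fun p => p.1 < p.2),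
        1 / (v p.1 * v p.2)) +
      (1 / (v n - 1)) * ∑ i ∈ Finset.Icc 1 (n - 1), 1 / v i = 1 ∧
    esymmQ n (n - 2) (fun i : Fin n => if (i : ℕ) + 1 = n then v n - 1 else v ((i : ℕ) + 1)) =
      esymmQ n n (fun i : Fin n => if (i : ℕ) + 1 = n then v n - 1 else v ((i : ℕ) + 1)) := by
  obtain ⟨m, rfl⟩ : ∃ m, n = m + 1 := ⟨n - 1, by omega⟩
  have hm : 1 ≤ m := by omega
  rw [Nat.add_sub_cancel]
  refine ⟨hv.sum_pairs_add_one_div_mul_sum_eq_one hm, ?_⟩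
  set w : ℕ → ℚ := fun k => if k = m + 1 then v (m + 1) - 1 else v k
  have hw_ne : ∀ i ∈ Icc 1 (m + 1), w i ≠ 0 := by
    intro i hi
    by_cases h : i = m + 1
    · simpa [w, h] using (hv.succ_sub_one_pos hm).ne'
    · simpa [w, h] using (hv.pos (mem_Icc.1 hi).1).ne'
  have hall : (Icc 1 (m + 1)).powersetCard (m + 1) = {Icc 1 (m + 1)} := by
    simpa using powersetCard_self (Icc 1 (m + 1))
  change esymmQ _ _ (fun i => w (i + 1)) = esymmQ _ _ (fun i => w (i + 1))
  rw [esymmQ_eq_sum_powersetCard_Icc, esymmQ_eq_sum_powersetCard_Icc, hall, sum_singleton,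
    sum_powersetCard_prod_eq_prod_mul_sum_inv (k := 2) (by simp; omega) hw_ne,
    hv.sum_powersetCard_two_inv_eq_one hm (w := w) (fun i hi => if_neg (by omega)) (if_pos rfl),
    mul_one]
end
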